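/- arXiv:1903.09631 — 8 statements merged into one kernel-verified Lean document; each statement's English description precedes it below -/
import Mathlib

section
/- Let S be a nonempty finite set. The set {u ∈ ℝ^S : Σ_{x∈S} u_x = 0 and ‖u‖₁ ≤ 1} (where ‖u‖₁ = Σ_{x∈S} |u_x|) is equal to the convex hull of the finite set {(e_x − e_y)/2 : x, y ∈ S}, where e_x ∈ ℝ^S denotes the standard basis vector supported on x. -/
open Finset

/-- The set `{u ∈ ℝ^S : ∑ u = 0, ‖u‖₁ ≤ 1}` equals the convex hull of
the points `(e_x − e_y)/2`, `x, y ∈ S`. -/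
theorem stmt0 {S : Type*} [Fintype S] [Nonempty S] [DecidableEq S] :
    {u : S → ℝ | (∑ x, u x) = 0 ∧ (∑ x, |u x|) ≤ 1} =
      convexHull ℝ
        {v : S → ℝ | ∃ x y : S, v = (1 / 2 : ℝ) • (Pi.single x 1 - Pi.single y 1)} := by
  apply Set.Subset.antisymm
  · -- hard direction
    intro u hu
    obtain ⟨hsum, hnorm⟩ := hu
    set p : S → ℝ := fun x => max (u x) 0 with hp
    set n : S → ℝ := fun x => max (-u x) 0 with hn
    have hp0 : ∀ x, 0 ≤ p x := fun x => le_max_right _ _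
    have hn0 : ∀ x, 0 ≤ n x := fun x => le_max_right _ _
    have hpn : ∀ x, p x - n x = u x := by
      intro x
      simp only [hp, hn]
      rcases le_total (u x) 0 with h | h
      · rw [max_eq_right h, max_eq_left (by linarith)]; ring
      · rw [max_eq_left h, max_eq_right (by linarith)]; ring
    have habs : ∀ x, p x + n x = |u x| := by
      intro x
      simp only [hp, hn]
      rcases le_total (u x) 0 with h | h
      · rw [max_eq_right h, max_eq_left (by linarith), abs_of_nonpos h]; ring
      · rw [max_eq_left h, max_eq_right (by linarith), abs_of_nonneg h]; ring
    set t : ℝ := ∑ x, p x with ht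
    have htn : ∑ x, n x = t := by
      have h1 : ∑ x, (p x - n x) = 0 := by simp_rw [hpn]; exact hsum
      rw [Finset.sum_sub_distrib] at h1
      linarith
    have ht2 : 2 * t ≤ 1 := by
      have : ∑ x, (p x + n x) = ∑ x, |u x| := by simp_rw [habs]
      rw [Finset.sum_add_distrib, htn] at this
      linarith
    have ht0 : 0 ≤ t := Finset.sum_nonneg fun x _ => hp0 x
    obtain ⟨x0⟩ := (inferInstance : Nonempty S)
    have hzero : (0 : S → ℝ) ∈ {v : S → ℝ | ∃ x y : S, v = (1 / 2 : ℝ) • (Pi.single x 1 - Pi.single y 1)} := by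
      refine ⟨x0, x0, ?_⟩
      simp
    rcases eq_or_lt_of_le ht0 with h0 | hpos
    · -- t = 0 : u = 0
      have hpz : ∀ x, p x = 0 := by
        intro x
        have := (Finset.sum_eq_zero_iff_of_nonneg (fun x _ => hp0 x)).1 h0.symm
        exact this x (Finset.mem_univ x)
      have hnz : ∀ x, n x = 0 := by
        intro x
        have := (Finset.sum_eq_zero_iff_of_nonneg (fun x _ => hn0 x)).1 (by rw [htn, ← h0])
        exact this x (Finset.mem_univ x)
      have : u = 0 := by
        funext x
        have := hpn x
        rw [hpz x, hnz x] at this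
        simpa using this.symm
      rw [this]
      exact subset_convexHull ℝ _ hzero
    · -- t > 0
      have htne : t ≠ 0 := ne_of_gt hpos
      set w : S × S → ℝ := fun q => 2 * p q.1 * n q.2 / t + (if q = (x0, x0) then 1 - 2 * t else 0) with hw
      set z : S × S → (S → ℝ) := fun q => (1 / 2 : ℝ) • (Pi.single q.1 1 - Pi.single q.2 1) with hz
      have hw0 : ∀ q ∈ Finset.univ (α := S × S), 0 ≤ w q := by
        intro q _
        apply add_nonneg
        · have := hp0 q.1; have := hn0 q.2; positivity
        · split <;> [linarith; rfl]
      have hrow : ∀ x : S, ∑ y : S, w (x, y) = 2 * p x + (if x = x0 then 1 - 2 * t else 0) := by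
        intro x
        simp only [hw]
        rw [Finset.sum_add_distrib]
        congr 1
        · rw [← Finset.sum_div, ← Finset.mul_sum, htn]
          field_simp
        · simp_rw [Prod.mk.injEq, ite_and]
          by_cases hx : x = x0 <;> simp [hx, Finset.sum_ite_eq' Finset.univ x0]
      have hcol : ∀ y : S, ∑ x : S, w (x, y) = 2 * n y + (if y = x0 then 1 - 2 * t else 0) := by
        intro y
        simp only [hw]
        rw [Finset.sum_add_distrib]
        congr 1
        · calc ∑ x : S, 2 * p x * n y / t = ∑ x : S, p x * (2 * n y / t) :=
                Finset.sum_congr rfl (fun x _ => by ring)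
            _ = t * (2 * n y / t) := by rw [← Finset.sum_mul]
            _ = 2 * n y := by field_simp
        · simp_rw [Prod.mk.injEq, ite_and]
          by_cases hy : y = x0 <;> simp [hy, Finset.sum_ite_eq Finset.univ x0]
      have hwsum : ∑ q : S × S, w q = 1 := by
        rw [Fintype.sum_prod_type]
        simp_rw [hrow]
        rw [Finset.sum_add_distrib, ← Finset.mul_sum, ← ht,
          Finset.sum_ite_eq' Finset.univ x0]
        simp only [Finset.mem_univ, if_true]
        ring
      have hmem : ∀ q ∈ Finset.univ (α := S × S), z q ∈ {v : S → ℝ | ∃ x y : S, v = (1 / 2 : ℝ) • (Pi.single x 1 - Pi.single y 1)} := by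
        intro q _
        exact ⟨q.1, q.2, rfl⟩
      have hcm := Finset.centerMass_mem_convexHull Finset.univ hw0 (by rw [hwsum]; norm_num) hmem
      have hcm2 : Finset.univ.centerMass w z = u := by
        rw [Finset.centerMass, hwsum, inv_one, one_smul]
        funext s
        rw [Finset.sum_apply]
        have hterm : ∀ q : S × S, (w q • z q) s =
            w q * (1 / 2) * (if s = q.1 then (1:ℝ) else 0) - w q * (1 / 2) * (if s = q.2 then (1:ℝ) else 0) := by
          intro q
          simp only [hz, Pi.smul_apply, Pi.sub_apply, Pi.single_apply, smul_eq_mul]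
          ring
        simp_rw [hterm]
        rw [Finset.sum_sub_distrib]
        have key1 : ∑ q : S × S, w q * (1 / 2) * (if s = q.1 then (1:ℝ) else 0) =
            p s + (if s = x0 then (1 - 2 * t) / 2 else 0) := by
          rw [Fintype.sum_prod_type]
          have inner : ∀ x : S, ∑ y : S, w (x, y) * (1 / 2) * (if s = x then (1:ℝ) else 0) =
              (2 * p x + (if x = x0 then 1 - 2 * t else 0)) * (1 / 2) * (if s = x then (1:ℝ) else 0) := by
            intro x
            rw [← hrow x, Finset.sum_mul, Finset.sum_mul]
          simp_rw [inner]
          simp only [mul_ite, mul_one, mul_zero]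
          rw [Finset.sum_ite_eq Finset.univ s]
          simp only [Finset.mem_univ, if_true]
          split_ifs <;> ring
        have key2 : ∑ q : S × S, w q * (1 / 2) * (if s = q.2 then (1:ℝ) else 0) =
            n s + (if s = x0 then (1 - 2 * t) / 2 else 0) := by
          rw [Fintype.sum_prod_type_right]
          have inner : ∀ y : S, ∑ x : S, w (x, y) * (1 / 2) * (if s = y then (1:ℝ) else 0) =
              (2 * n y + (if y = x0 then 1 - 2 * t else 0)) * (1 / 2) * (if s = y then (1:ℝ) else 0) := by
            intro y
            rw [← hcol y, Finset.sum_mul, Finset.sum_mul]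
          simp_rw [inner]
          simp only [mul_ite, mul_one, mul_zero]
          rw [Finset.sum_ite_eq Finset.univ s]
          simp only [Finset.mem_univ, if_true]
          split_ifs <;> ring
        rw [key1, key2, ← hpn s]
        ring
      rw [hcm2] at hcm
      exact hcm
  · -- easy direction
    apply convexHull_min
    · rintro v ⟨x, y, rfl⟩
      constructor
      · simp only [Pi.smul_apply, Pi.sub_apply, smul_eq_mul, Pi.single_apply]
        simp_rw [mul_sub]
        rw [Finset.sum_sub_distrib]
        simp [Finset.mul_sum, Finset.sum_ite_eq' Finset.univ]
      · have hb : ∀ s : S, |((1 / 2 : ℝ) • (Pi.single x 1 - Pi.single y 1) : S → ℝ) s| ≤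
            (1/2) * ((if s = x then (1:ℝ) else 0) + (if s = y then 1 else 0)) := by
          intro s
          simp only [Pi.smul_apply, Pi.sub_apply, smul_eq_mul, Pi.single_apply, abs_mul]
          rw [abs_of_nonneg (by norm_num : (0:ℝ) ≤ 1/2)]
          gcongr
          calc |(if s = x then (1:ℝ) else 0) - (if s = y then 1 else 0)|
              ≤ |(if s = x then (1:ℝ) else 0)| + |(if s = y then (1:ℝ) else 0)| := abs_sub _ _
            _ = (if s = x then (1:ℝ) else 0) + (if s = y then 1 else 0) := by
                rw [abs_of_nonneg (by positivity), abs_of_nonneg (by positivity)]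
        calc ∑ s, |((1 / 2 : ℝ) • (Pi.single x 1 - Pi.single y 1) : S → ℝ) s|
            ≤ ∑ s, (1/2) * ((if s = x then (1:ℝ) else 0) + (if s = y then 1 else 0)) :=
              Finset.sum_le_sum fun s _ => hb s
          _ ≤ 1 := by
              rw [← Finset.mul_sum, Finset.sum_add_distrib]
              rw [Finset.sum_ite_eq' Finset.univ x, Finset.sum_ite_eq' Finset.univ y]
              norm_num
    · intro u hu v hv a b ha hb hab
      simp only [Set.mem_setOf_eq] at hu hv ⊢
      constructor
      · simp only [Pi.add_apply, Pi.smul_apply, smul_eq_mul]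
        rw [Finset.sum_add_distrib, ← Finset.mul_sum, ← Finset.mul_sum, hu.1, hv.1]
        ring
      · calc ∑ x, |(a • u + b • v) x| ≤ ∑ x, (a * |u x| + b * |v x|) := by
              apply Finset.sum_le_sum
              intro x _
              simp only [Pi.add_apply, Pi.smul_apply, smul_eq_mul]
              calc |a * u x + b * v x| ≤ |a * u x| + |b * v x| := abs_add_le _ _
                _ = a * |u x| + b * |v x| := by
                    rw [abs_mul, abs_mul, abs_of_nonneg ha, abs_of_nonneg hb]
          _ = a * (∑ x, |u x|) + b * (∑ x, |v x|) := by
              rw [Finset.sum_add_distrib, Finset.mul_sum, Finset.mul_sum]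
          _ ≤ a * 1 + b * 1 := by gcongr; exact hu.2; exact hv.2
          _ = 1 := by rw [mul_one, mul_one, hab]
end

section
/- Let S be a nonempty finite set and let P ∈ ℝ^{S×S} be row-stochastic. Then the Dobrushin ergodicity coefficient satisfies τ₁(P) = max_{x,y∈S} (1/2)‖(e_x − e_y)ᵀP‖₁, i.e., τ₁(P) equals the maximum total-variation distance between two rows of P. -/
open Finset

/-- The Dobrushin ergodicity coefficient of a matrix `P`. -/
noncomputable def tau1 {S : Type*} [Fintype S] (P : Matrix S S ℝ) : ℝ :=
  sSup {r : ℝ | ∃ u : S → ℝ, u ≠ 0 ∧ (∑ x, u x) = 0 ∧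
    r = (∑ x, |Matrix.vecMul u P x|) / (∑ x, |u x|)}

lemma key {S : Type*} [Fintype S] (P : Matrix S S ℝ) (D : ℝ)
    (hD : ∀ x y : S, (∑ z, |P x z - P y z|) ≤ 2 * D)
    (u : S → ℝ) (hsum : (∑ x, u x) = 0) :
    (∑ z, |Matrix.vecMul u P z|) ≤ (∑ x, |u x|) * D := by
  set up : S → ℝ := fun x => max (u x) 0 with hup
  set un : S → ℝ := fun x => max (-u x) 0 with hun
  have hup0 : ∀ x, 0 ≤ up x := fun x => le_max_right _ _
  have hun0 : ∀ x, 0 ≤ un x := fun x => le_max_right _ _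
  have hdecomp : ∀ x, u x = up x - un x := by
    intro x; rcases le_total 0 (u x) with h | h
    · rw [hup, hun]; simp only
      rw [max_eq_left h, max_eq_right (by linarith)]; ring
    · rw [hup, hun]; simp only
      rw [max_eq_right h, max_eq_left (by linarith)]; ring
  have habs : ∀ x, |u x| = up x + un x := by
    intro x; rcases le_total 0 (u x) with h | h
    · rw [abs_of_nonneg h, hup, hun]; simp only
      rw [max_eq_left h, max_eq_right (by linarith)]; ring
    · rw [abs_of_nonpos h, hup, hun]; simp only
      rw [max_eq_right h, max_eq_left (by linarith)]; ring
  set a : ℝ := ∑ x, up x with ha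
  have ha0 : 0 ≤ a := Finset.sum_nonneg fun x _ => hup0 x
  have hab : (∑ x, un x) = a := by
    have : (∑ x, (up x - un x)) = 0 := by
      rw [← hsum]; exact Finset.sum_congr rfl fun x _ => (hdecomp x).symm
    rw [Finset.sum_sub_distrib] at this; linarith
  have habs_sum : (∑ x, |u x|) = 2 * a := by
    rw [Finset.sum_congr rfl fun x _ => habs x, Finset.sum_add_distrib, hab]; ring
  rcases eq_or_lt_of_le ha0 with hz | hpos
  · -- a = 0, so u = 0
    have hu0 : ∀ x, u x = 0 := by
      intro x
      have h1 : ∀ x ∈ Finset.univ, up x = 0 :=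
        (Finset.sum_eq_zero_iff_of_nonneg (fun x _ => hup0 x)).mp hz.symm
      have h2 : ∀ x ∈ Finset.univ, un x = 0 := by
        apply (Finset.sum_eq_zero_iff_of_nonneg (fun x _ => hun0 x)).mp
        rw [hab]; exact hz.symm
      rw [hdecomp x, h1 x (Finset.mem_univ x), h2 x (Finset.mem_univ x)]; ring
    have : ∀ z, Matrix.vecMul u P z = 0 := by
      intro z; simp only [Matrix.vecMul, dotProduct]
      exact Finset.sum_eq_zero fun x _ => by rw [hu0 x]; ring
    simp only [this, abs_zero, Finset.sum_const_zero]
    rw [habs_sum, ← hz]; simp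
  · -- main case
    have hvec : ∀ z, Matrix.vecMul u P z = (∑ x, up x * P x z) - (∑ x, un x * P x z) := by
      intro z; simp only [Matrix.vecMul, dotProduct]
      rw [← Finset.sum_sub_distrib]
      exact Finset.sum_congr rfl fun x _ => by rw [hdecomp x]; ring
    have hkey : ∀ z, a * Matrix.vecMul u P z = ∑ x, ∑ y, up x * un y * (P x z - P y z) := by
      intro z
      have expand : (∑ x, ∑ y, up x * un y * (P x z - P y z))
          = (∑ x, up x * P x z) * (∑ y, un y) - (∑ x, up x) * (∑ y, un y * P y z) := by
        rw [Finset.sum_mul_sum, Finset.sum_mul_sum, ← Finset.sum_sub_distrib]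
        refine Finset.sum_congr rfl fun x _ => ?_
        rw [← Finset.sum_sub_distrib]
        exact Finset.sum_congr rfl fun y _ => by ring
      rw [expand, hvec z, hab, ← ha]; ring
    have step : (∑ z, |Matrix.vecMul u P z|) * a ≤ 2 * D * (a * a) := by
      calc (∑ z, |Matrix.vecMul u P z|) * a = ∑ z, |a * Matrix.vecMul u P z| := by
            rw [Finset.sum_mul]
            exact Finset.sum_congr rfl fun z _ => by
              rw [abs_mul, abs_of_nonneg ha0]; ring
        _ ≤ ∑ z, ∑ x, ∑ y, up x * un y * |P x z - P y z| := by
            refine Finset.sum_le_sum fun z _ => ?_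
            rw [hkey z]
            calc |∑ x, ∑ y, up x * un y * (P x z - P y z)|
                ≤ ∑ x, |∑ y, up x * un y * (P x z - P y z)| := Finset.abs_sum_le_sum_abs _ _
              _ ≤ ∑ x, ∑ y, up x * un y * |P x z - P y z| := by
                  refine Finset.sum_le_sum fun x _ => ?_
                  calc |∑ y, up x * un y * (P x z - P y z)|
                      ≤ ∑ y, |up x * un y * (P x z - P y z)| := Finset.abs_sum_le_sum_abs _ _
                    _ = ∑ y, up x * un y * |P x z - P y z| := by
                        refine Finset.sum_congr rfl fun y _ => ?_
                        rw [abs_mul, abs_of_nonneg (mul_nonneg (hup0 x) (hun0 y))]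
        _ = ∑ x, ∑ y, up x * un y * (∑ z, |P x z - P y z|) := by
            rw [Finset.sum_comm]
            refine Finset.sum_congr rfl fun x _ => ?_
            rw [Finset.sum_comm]
            refine Finset.sum_congr rfl fun y _ => ?_
            rw [Finset.mul_sum]
        _ ≤ ∑ x, ∑ y, up x * un y * (2 * D) := by
            refine Finset.sum_le_sum fun x _ => Finset.sum_le_sum fun y _ => ?_
            exact mul_le_mul_of_nonneg_left (hD x y) (mul_nonneg (hup0 x) (hun0 y))
        _ = 2 * D * (a * a) := by
            simp only [← Finset.sum_mul, ← Finset.mul_sum]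
            rw [hab, ← ha]; ring
    rw [habs_sum]
    have : (∑ z, |Matrix.vecMul u P z|) * a ≤ (2 * a * D) * a := by
      calc (∑ z, |Matrix.vecMul u P z|) * a ≤ 2 * D * (a * a) := step
        _ = (2 * a * D) * a := by ring
    exact le_of_mul_le_mul_right this hpos

-- (key lemma assumed above, using `key`)
lemma pair_props {S : Type*} [Fintype S] [DecidableEq S] (P : Matrix S S ℝ) {x y : S} (hxy : x ≠ y) :
    let u : S → ℝ := fun w => (if w = x then 1 else 0) - (if w = y then 1 else 0)
    u ≠ 0 ∧ (∑ w, u w) = 0 ∧ (∑ w, |u w|) = 2 ∧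
      ∀ z, Matrix.vecMul u P z = P x z - P y z := by
  intro u
  refine ⟨?_, ?_, ?_, ?_⟩
  · intro h
    have := congrFun h x
    simp [u, hxy] at this
  · simp only [u, Finset.sum_sub_distrib, Finset.sum_ite_eq', Finset.mem_univ, if_true]
    ring
  · have hptw : ∀ w, |u w| = (if w = x then (1:ℝ) else 0) + (if w = y then 1 else 0) := by
      intro w
      by_cases h1 : w = x
      · subst h1; simp [u, hxy]
      · by_cases h2 : w = y
        · subst h2; simp [u, h1]
        · simp [u, h1, h2]
    rw [Finset.sum_congr rfl fun w _ => hptw w, Finset.sum_add_distrib]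
    simp only [Finset.sum_ite_eq', Finset.mem_univ, if_true]
    norm_num
  · intro z
    simp only [Matrix.vecMul, dotProduct, u, sub_mul, one_mul, zero_mul,
      Finset.sum_sub_distrib, ite_mul, Finset.sum_ite_eq', Finset.mem_univ, if_true]

/-- For a row-stochastic matrix `P`, the Dobrushin ergodicity coefficient
equals the maximum total-variation distance between two rows of `P`. -/
theorem stmt1 {S : Type*} [Fintype S] [Nonempty S] (P : Matrix S S ℝ)
    (hP0 : ∀ x y, 0 ≤ P x y) (hProw : ∀ x, (∑ y, P x y) = 1) :
    tau1 P = sSup {r : ℝ | ∃ x y : S, r = (1 / 2) * ∑ z, |P x z - P y z|} := by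
  classical
  set Dset : Set ℝ := {r : ℝ | ∃ x y : S, r = (1 / 2) * ∑ z, |P x z - P y z|} with hDset
  set Tset : Set ℝ := {r : ℝ | ∃ u : S → ℝ, u ≠ 0 ∧ (∑ x, u x) = 0 ∧
    r = (∑ x, |Matrix.vecMul u P x|) / (∑ x, |u x|)} with hTset
  have htau : tau1 P = sSup Tset := rfl
  set D : ℝ := sSup Dset with hDdef
  have hDfin : Dset.Finite := by
    apply Set.Finite.subset (Set.finite_range
      (fun p : S × S => (1 / 2 : ℝ) * ∑ z, |P p.1 z - P p.2 z|))
    rintro r ⟨x, y, rfl⟩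
    exact ⟨(x, y), rfl⟩
  have hDbdd : BddAbove Dset := hDfin.bddAbove
  have x0 : S := Classical.arbitrary S
  have hDne : Dset.Nonempty := ⟨(1 / 2 : ℝ) * ∑ z, |P x0 z - P x0 z|, x0, x0, rfl⟩
  have hD : ∀ x y : S, (∑ z, |P x z - P y z|) ≤ 2 * D := by
    intro x y
    have : (1 / 2 : ℝ) * ∑ z, |P x z - P y z| ≤ D := le_csSup hDbdd ⟨x, y, rfl⟩
    linarith
  have hTle : ∀ r ∈ Tset, r ≤ D := by
    rintro r ⟨u, hu, hsum, rfl⟩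
    have hpos : 0 < ∑ x, |u x| := by
      have : ∃ x, u x ≠ 0 := by
        by_contra h
        push_neg at h
        exact hu (funext h)
      obtain ⟨x, hx⟩ := this
      exact Finset.sum_pos' (fun y _ => abs_nonneg _)
        ⟨x, Finset.mem_univ x, abs_pos.mpr hx⟩
    rw [div_le_iff₀ hpos]
    calc (∑ x, |Matrix.vecMul u P x|) ≤ (∑ x, |u x|) * D := key P D hD u hsum
      _ = D * (∑ x, |u x|) := by ring
  have hTbdd : BddAbove Tset := ⟨D, hTle⟩
  by_cases hS : ∃ x y : S, x ≠ y
  · obtain ⟨a0, b0, hab0⟩ := hS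
    obtain ⟨hu0ne, hu0sum, hu0abs, hu0vec⟩ := pair_props P hab0
    set u0 : S → ℝ := fun w => (if w = a0 then 1 else 0) - (if w = b0 then 1 else 0) with hu0
    have hmem0 : (∑ x, |Matrix.vecMul u0 P x|) / (∑ x, |u0 x|) ∈ Tset :=
      ⟨u0, hu0ne, hu0sum, rfl⟩
    have hTne : Tset.Nonempty := ⟨_, hmem0⟩
    have h0le : (0 : ℝ) ≤ sSup Tset := by
      have h1 : (0 : ℝ) ≤ (∑ x, |Matrix.vecMul u0 P x|) / (∑ x, |u0 x|) :=
        div_nonneg (Finset.sum_nonneg fun x _ => abs_nonneg _)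
          (Finset.sum_nonneg fun x _ => abs_nonneg _)
      exact h1.trans (le_csSup hTbdd hmem0)
    rw [htau]
    apply le_antisymm
    · exact csSup_le hTne hTle
    · apply csSup_le hDne
      rintro r ⟨x, y, rfl⟩
      by_cases hxy : x = y
      · subst hxy
        simp only [sub_self, abs_zero, Finset.sum_const_zero, mul_zero]
        exact h0le
      · obtain ⟨hune, husum, huabs, huvec⟩ := pair_props P hxy
        set u : S → ℝ := fun w => (if w = x then 1 else 0) - (if w = y then 1 else 0) with hu
        have hval : (∑ z, |Matrix.vecMul u P z|) / (∑ z, |u z|)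
            = (1 / 2 : ℝ) * ∑ z, |P x z - P y z| := by
          rw [huabs, show (∑ z, |Matrix.vecMul u P z|) = ∑ z, |P x z - P y z| from
            Finset.sum_congr rfl fun z _ => by rw [huvec z]]
          ring
        rw [← hval]
        exact le_csSup hTbdd ⟨u, hune, husum, rfl⟩
  · push_neg at hS
    have hTempty : Tset = ∅ := by
      ext r
      simp only [Set.mem_empty_iff_false, iff_false, hTset, Set.mem_setOf_eq]
      rintro ⟨u, hu, hsum, rfl⟩
      apply hu
      funext w
      have huniv : (Finset.univ : Finset S) = {w} := by
        ext z; simp [hS z w]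
      have : (∑ x, u x) = u w := by rw [huniv, Finset.sum_singleton]
      rw [this] at hsum
      exact hsum
    have hDsingle : Dset = {0} := by
      ext r
      simp only [Set.mem_singleton_iff, hDset, Set.mem_setOf_eq]
      constructor
      · rintro ⟨x, y, rfl⟩
        rw [hS x y]
        simp
      · rintro rfl
        exact ⟨x0, x0, by simp⟩
    rw [htau, hTempty, Real.sSup_empty, hDdef, hDsingle, csSup_singleton]
end

section
/- Let S be a nonempty finite set and P ∈ ℝ^{S×S} a row-stochastic matrix. Then τ₁(P) ≤ 1. Moreover, τ₁(P) < 1 if and only if no two rows of P are orthogonal, i.e., if and only if for every pair x, y ∈ S there exists z ∈ S with P_{xz} > 0 and P_{yz} > 0. In particular, if P has a column all of whose entries are positive, then τ₁(P) < 1. -/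
open Finset

lemma contraction_aux {S : Type*} [Fintype S] (P : Matrix S S ℝ) (C : ℝ)
    (hD : ∀ x y : S, (∑ z, |P x z - P y z|) ≤ C)
    (u : S → ℝ) (hu : (∑ x, u x) = 0) :
    (∑ z, |Matrix.vecMul u P z|) * 2 ≤ C * (∑ x, |u x|) := by
  classical
  set a : S → ℝ := fun x => max (u x) 0 with ha
  set b : S → ℝ := fun x => max (-u x) 0 with hb
  have ha0 : ∀ x, 0 ≤ a x := fun x => le_max_right _ _
  have hb0 : ∀ x, 0 ≤ b x := fun x => le_max_right _ _
  have hab : ∀ x, a x - b x = u x := by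
    intro x
    rcases le_total 0 (u x) with h | h
    · rw [ha, hb]
      simp only
      rw [max_eq_left h, max_eq_right (neg_nonpos.mpr h), sub_zero]
    · rw [ha, hb]
      simp only
      rw [max_eq_right h, max_eq_left (neg_nonneg.mpr h), zero_sub, neg_neg]
  have habs : ∀ x, a x + b x = |u x| := by
    intro x
    rcases le_total 0 (u x) with h | h
    · rw [ha, hb]
      simp only
      rw [max_eq_left h, max_eq_right (neg_nonpos.mpr h), add_zero, abs_of_nonneg h]
    · rw [ha, hb]
      simp only
      rw [max_eq_right h, max_eq_left (neg_nonneg.mpr h), zero_add, abs_of_nonpos h]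
  set m : ℝ := ∑ x, a x with hm
  have hm0 : 0 ≤ m := Finset.sum_nonneg fun x _ => ha0 x
  have hbm : (∑ x, b x) = m := by
    have h : (∑ x, a x) - (∑ x, b x) = 0 := by
      rw [← Finset.sum_sub_distrib]
      rw [Finset.sum_congr rfl fun x _ => hab x]
      exact hu
    linarith
  have hsum_u : (∑ x, |u x|) = 2 * m := by
    have he : (∑ x, |u x|) = ∑ x, (a x + b x) :=
      Finset.sum_congr rfl fun x _ => (habs x).symm
    rw [he, Finset.sum_add_distrib, hbm]
    ring
  have hv : ∀ z, Matrix.vecMul u P z = ∑ x, u x * P x z := fun z => rfl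
  have h1 : ∀ z, m * Matrix.vecMul u P z = ∑ x, ∑ y, a x * b y * (P x z - P y z) := by
    intro z
    calc m * Matrix.vecMul u P z
        = m * ((∑ x, a x * P x z) - (∑ x, b x * P x z)) := by
          rw [hv z]
          congr 1
          rw [← Finset.sum_sub_distrib]
          exact Finset.sum_congr rfl fun x _ => by rw [← hab x]; ring
      _ = (∑ x, a x * P x z) * (∑ y, b y) - (∑ x, a x) * (∑ y, b y * P y z) := by
          rw [hbm, ← hm]; ring
      _ = (∑ x, ∑ y, (a x * P x z) * b y) - (∑ x, ∑ y, a x * (b y * P y z)) := by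
          rw [Finset.sum_mul_sum, Finset.sum_mul_sum]
      _ = ∑ x, ∑ y, a x * b y * (P x z - P y z) := by
          rw [← Finset.sum_sub_distrib]
          refine Finset.sum_congr rfl fun x _ => ?_
          rw [← Finset.sum_sub_distrib]
          exact Finset.sum_congr rfl fun y _ => by ring
  have h2 : m * (∑ z, |Matrix.vecMul u P z|) ≤ C * (m * m) := by
    calc m * (∑ z, |Matrix.vecMul u P z|)
        = ∑ z, |m * Matrix.vecMul u P z| := by
          rw [Finset.mul_sum]
          exact Finset.sum_congr rfl fun z _ => by
            rw [abs_mul, abs_of_nonneg hm0]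
      _ = ∑ z, |∑ x, ∑ y, a x * b y * (P x z - P y z)| := by
          exact Finset.sum_congr rfl fun z _ => by rw [h1 z]
      _ ≤ ∑ z, ∑ x, ∑ y, |a x * b y * (P x z - P y z)| := by
          refine Finset.sum_le_sum fun z _ => ?_
          refine (Finset.abs_sum_le_sum_abs _ _).trans ?_
          exact Finset.sum_le_sum fun x _ => Finset.abs_sum_le_sum_abs _ _
      _ = ∑ x, ∑ y, a x * b y * (∑ z, |P x z - P y z|) := by
          rw [Finset.sum_comm]
          refine Finset.sum_congr rfl fun x _ => ?_
          rw [Finset.sum_comm]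
          refine Finset.sum_congr rfl fun y _ => ?_
          rw [Finset.mul_sum]
          refine Finset.sum_congr rfl fun z _ => ?_
          rw [abs_mul, abs_of_nonneg (mul_nonneg (ha0 x) (hb0 y))]
      _ ≤ ∑ x, ∑ y, a x * b y * C := by
          refine Finset.sum_le_sum fun x _ => Finset.sum_le_sum fun y _ => ?_
          exact mul_le_mul_of_nonneg_left (hD x y) (mul_nonneg (ha0 x) (hb0 y))
      _ = C * (m * m) := by
          rw [show (∑ x, ∑ y, a x * b y * C) = (∑ x, ∑ y, a x * b y) * C by
            rw [Finset.sum_mul]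
            exact Finset.sum_congr rfl fun x _ => (Finset.sum_mul _ _ _).symm]
          rw [← Finset.sum_mul_sum, hbm, ← hm]
          ring
  rcases eq_or_lt_of_le hm0 with hm' | hm'
  · have hu0 : ∀ x, u x = 0 := by
      intro x
      have h0 : (∑ x, |u x|) = 0 := by rw [hsum_u, ← hm']; ring
      have := (Finset.sum_eq_zero_iff_of_nonneg (fun x _ => abs_nonneg (u x))).mp h0 x
        (Finset.mem_univ x)
      exact abs_eq_zero.mp this
    have hv0 : ∀ z, Matrix.vecMul u P z = 0 := by
      intro z
      rw [hv z]
      exact Finset.sum_eq_zero fun x _ => by rw [hu0 x, zero_mul]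
    have : (∑ z, |Matrix.vecMul u P z|) = 0 :=
      Finset.sum_eq_zero fun z _ => by rw [hv0 z, abs_zero]
    rw [this, hsum_u, ← hm']
    ring_nf
    simp only [le_refl]
  · have hT : (∑ z, |Matrix.vecMul u P z|) ≤ C * m := by
      have := h2
      nlinarith [hm']
    rw [hsum_u]
    nlinarith [hT]

/-- For a row-stochastic matrix `P`: `τ₁(P) ≤ 1`; `τ₁(P) < 1` iff no two
rows of `P` are orthogonal; and if `P` has a column with all entries positive then
`τ₁(P) < 1`. -/
theorem stmt3 {S : Type*} [Fintype S] [Nonempty S] (P : Matrix S S ℝ)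
    (hP0 : ∀ x y, 0 ≤ P x y) (hProw : ∀ x, (∑ y, P x y) = 1) :
    tau1 P ≤ 1 ∧
    (tau1 P < 1 ↔ ∀ x y : S, ∃ z : S, 0 < P x z ∧ 0 < P y z) ∧
    ((∃ z : S, ∀ x : S, 0 < P x z) → tau1 P < 1) := by
  classical
  have hD2 : ∀ x y : S, (∑ z, |P x z - P y z|) = 2 - 2 * ∑ z, min (P x z) (P y z) := by
    intro x y
    have hpt : ∀ z, |P x z - P y z| = P x z + P y z - 2 * min (P x z) (P y z) := by
      intro z
      rcases le_total (P x z) (P y z) with h | h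
      · rw [abs_of_nonpos (by linarith), min_eq_left h]; ring
      · rw [abs_of_nonneg (by linarith), min_eq_right h]; ring
    rw [Finset.sum_congr rfl fun z _ => hpt z, Finset.sum_sub_distrib,
      Finset.sum_add_distrib, hProw, hProw, ← Finset.mul_sum]
    ring
  set C : ℝ := Finset.sup' Finset.univ Finset.univ_nonempty
    (fun p : S × S => ∑ z, |P p.1 z - P p.2 z|) with hCdef
  have hDC : ∀ x y : S, (∑ z, |P x z - P y z|) ≤ C := fun x y =>
    Finset.le_sup' (fun p : S × S => ∑ z, |P p.1 z - P p.2 z|) (Finset.mem_univ (x, y))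
  have hC2 : C ≤ 2 := by
    refine Finset.sup'_le _ _ fun p _ => ?_
    rw [hD2]
    have h0 : 0 ≤ ∑ z, min (P p.1 z) (P p.2 z) :=
      Finset.sum_nonneg fun z _ => le_min (hP0 _ _) (hP0 _ _)
    linarith
  have hC0 : 0 ≤ C := by
    obtain ⟨x0⟩ := ‹Nonempty S›
    have h := hDC x0 x0
    simpa using h
  have hset : ∀ r ∈ {r : ℝ | ∃ u : S → ℝ, u ≠ 0 ∧ (∑ x, u x) = 0 ∧
      r = (∑ x, |Matrix.vecMul u P x|) / (∑ x, |u x|)}, r ≤ C / 2 := by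
    rintro r ⟨u, hu0, husum, rfl⟩
    have hpos : 0 < ∑ x, |u x| := by
      obtain ⟨x, hx⟩ := Function.ne_iff.mp hu0
      exact Finset.sum_pos' (fun i _ => abs_nonneg _)
        ⟨x, Finset.mem_univ x, abs_pos.mpr hx⟩
    rw [div_le_div_iff₀ hpos (by norm_num : (0:ℝ) < 2)]
    exact contraction_aux P C hDC u husum
  have htau_le : tau1 P ≤ C / 2 := Real.sSup_le hset (by linarith)
  have hbdd : BddAbove {r : ℝ | ∃ u : S → ℝ, u ≠ 0 ∧ (∑ x, u x) = 0 ∧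
      r = (∑ x, |Matrix.vecMul u P x|) / (∑ x, |u x|)} := ⟨C / 2, hset⟩
  have h1le : tau1 P ≤ 1 := htau_le.trans (by linarith)
  have hfwd : tau1 P < 1 → ∀ x y : S, ∃ z : S, 0 < P x z ∧ 0 < P y z := by
    intro h x y
    by_contra hcon
    push_neg at hcon
    have hmin : ∀ z, min (P x z) (P y z) = 0 := by
      intro z
      rcases lt_or_ge 0 (P x z) with h' | h'
      · have hy : P y z = 0 := le_antisymm (hcon z h') (hP0 y z)
        rw [hy, min_eq_right (hP0 x z)]
      · have hx0 : P x z = 0 := le_antisymm h' (hP0 x z)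
        rw [hx0, min_eq_left (hP0 y z)]
    have hxy : x ≠ y := by
      rintro rfl
      have hz : (∑ z, P x z) = 0 := Finset.sum_eq_zero fun z _ => by
        have := hmin z; simpa using this
      rw [hProw] at hz
      norm_num at hz
    have hDxy : (∑ z, |P x z - P y z|) = 2 := by
      rw [hD2]
      rw [Finset.sum_eq_zero fun z _ => hmin z]
      ring
    set u : S → ℝ := fun s => (if s = x then (1:ℝ) else 0) - (if s = y then 1 else 0)
      with hudef
    have husum : (∑ s, u s) = 0 := by
      simp [hudef, Finset.sum_sub_distrib]
    have hune : u ≠ 0 := by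
      intro hzero
      have hx1 : u x = 0 := congrFun hzero x
      rw [hudef] at hx1
      simp [hxy] at hx1
    have huabs : (∑ s, |u s|) = 2 := by
      have hpt : ∀ s, |u s| = (if s = x then (1:ℝ) else 0) + (if s = y then 1 else 0) := by
        intro s
        by_cases h1 : s = x
        · subst h1; simp [hudef, hxy]
        · by_cases h2 : s = y
          · subst h2; simp [hudef, h1, Ne.symm hxy]
          · simp [hudef, h1, h2]
      rw [Finset.sum_congr rfl fun s _ => hpt s, Finset.sum_add_distrib]
      simp
      norm_num
    have hvec : ∀ z, Matrix.vecMul u P z = P x z - P y z := by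
      intro z
      have : Matrix.vecMul u P z = ∑ s, u s * P s z := rfl
      rw [this]
      simp [hudef, sub_mul, ite_mul, Finset.sum_sub_distrib]
    have h1mem : (1:ℝ) ∈ {r : ℝ | ∃ u : S → ℝ, u ≠ 0 ∧ (∑ x, u x) = 0 ∧
        r = (∑ x, |Matrix.vecMul u P x|) / (∑ x, |u x|)} := by
      refine ⟨u, hune, husum, ?_⟩
      rw [huabs, Finset.sum_congr rfl fun z _ => by rw [hvec z], hDxy]
      norm_num
    have h1' : (1:ℝ) ≤ tau1 P := le_csSup hbdd h1mem
    linarith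
  have hbwd : (∀ x y : S, ∃ z : S, 0 < P x z ∧ 0 < P y z) → tau1 P < 1 := by
    intro hov
    have hClt : C < 2 := by
      rw [hCdef, Finset.sup'_lt_iff]
      rintro ⟨x, y⟩ _
      obtain ⟨z, hz1, hz2⟩ := hov x y
      rw [hD2]
      have hp : 0 < ∑ w, min (P x w) (P y w) :=
        Finset.sum_pos' (fun i _ => le_min (hP0 _ _) (hP0 _ _))
          ⟨z, Finset.mem_univ z, lt_min hz1 hz2⟩
      linarith
    exact lt_of_le_of_lt htau_le (by linarith)
  exact ⟨h1le, ⟨hfwd, hbwd⟩, fun ⟨z, hz⟩ => hbwd fun x y => ⟨z, hz x, hz y⟩⟩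
end

section
/- Fix integers N ≥ 1, p ≥ 1, a tensor Θ ∈ ℝ^{N×N×p}, ε ∈ (0,1/2), L_f > 0, and a function f : ℝ → [ε, 1−ε] that is L_f-Lipschitz. Let S = {0,1}^N and define the MBP conditional pmf q and block pmfs p_z as in the context. Then for all z, y ∈ S^p, the Kullback–Leibler divergence satisfies Σ_{a∈S^p} p_z(a)·log(p_z(a)/p_y(a)) ≤ (3L_f²/(4ε(1−ε))) · Σ_{t=1}^p Σ_{i=1}^N (Σ_{ℓ=t}^p Σ_{j=1}^N |Θ_{ijℓ}|)². -/
open Finset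

/-- The history argument at step `i` (0-indexed) of a block of `p` steps of a
`p`-Markov process. -/
def histArg {S : Type*} {p : ℕ} (a z : Fin p → S) (i : Fin p) : Fin p → S :=
  fun j =>
    if (j : ℕ) < (i : ℕ) then
      a ⟨(i : ℕ) - 1 - (j : ℕ),
        lt_of_le_of_lt (le_trans (Nat.sub_le _ _) (Nat.sub_le _ _)) i.isLt⟩
    else
      z ⟨(j : ℕ) - (i : ℕ), lt_of_le_of_lt (Nat.sub_le _ _) j.isLt⟩

/-- The block pmf `p_z` on `S^p` of `p` consecutive steps of the `p`-Markov process
with conditional pmf `q`, started from the history `z` (most recent first). -/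
def blockPmf {S : Type*} {p : ℕ} (q : S → (Fin p → S) → ℝ)
    (z : Fin p → S) (a : Fin p → S) : ℝ :=
  ∏ i : Fin p, q (a i) (histArg a z i)

/-- `⟨Θ_{i**}, b⟩ = Σ_j Σ_ℓ Θ_{ijℓ} (b_ℓ)_j` for a binary history `b` (most recent
first). -/
def mbpInner {N p : ℕ} (Θ : Fin N → Fin N → Fin p → ℝ) (i : Fin N)
    (b : Fin p → (Fin N → Bool)) : ℝ :=
  ∑ j : Fin N, ∑ ℓ : Fin p, Θ i j ℓ * (if b ℓ j then 1 else 0)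

/-- The MBP conditional pmf
`q(ξ|b) = Π_i f(⟨Θ_{i**},b⟩)^{ξ_i} (1−f(⟨Θ_{i**},b⟩))^{1−ξ_i}`. -/
def mbpQ {N p : ℕ} (Θ : Fin N → Fin N → Fin p → ℝ) (f : ℝ → ℝ)
    (ξ : Fin N → Bool) (b : Fin p → (Fin N → Bool)) : ℝ :=
  ∏ i : Fin N, if ξ i then f (mbpInner Θ i b) else 1 - f (mbpInner Θ i b)

/-!
By the chain rule, the KL divergence between the block pmfs is the sum over the steps `t` of the
expected KL divergence between the conditional pmfs `q(·|b)` and `q(·|b')` at the two histories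
of step `t`. The conditional pmf of step `t` reads only earlier coordinates, so each expectation is
at most any bound on the conditional divergence that is uniform in the history. A conditional pmf
is a product of Bernoulli pmfs, hence its divergence is a sum of Bernoulli divergences, and
`KL(α ‖ β) ≤ (α - β)² / (2ε(1 - ε))` for `α, β ∈ [ε, 1 - ε]`. The two histories of step `t` share
the block's first `t` entries and differ only where they read `z` and `y`, so the arguments of `f`
differ by at most `Σ_{ℓ ≥ t} Σ_j |Θ_{ijℓ}|`; the Lipschitz bound then gives the claim, even with
`1/2` in place of `3/4`.
-/

noncomputable def discreteKL {α : Type*} [Fintype α] (P Q : α → ℝ) : ℝ :=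
  ∑ x, P x * Real.log (P x / Q x)

lemma isMinOn_of_hasDerivAt_of_mul_sub_nonneg {ψ ψ' : ℝ → ℝ} {s : Set ℝ} (hs : s.OrdConnected)
    {α : ℝ} (hα : α ∈ s) (hψ : ∀ x ∈ s, HasDerivAt ψ (ψ' x) x)
    (hsign : ∀ x ∈ s, 0 ≤ (x - α) * ψ' x) : IsMinOn ψ s α := by
  intro β hβ
  have hcont : ∀ {u v}, u ∈ s → v ∈ s → ContinuousOn ψ (Set.Icc u v) := fun hu hv x hx =>
    (hψ x (hs.out hu hv hx)).continuousAt.continuousWithinAt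
  have hderiv : ∀ {u v}, u ∈ s → v ∈ s → ∀ x ∈ interior (Set.Icc u v),
      HasDerivWithinAt ψ (ψ' x) (interior (Set.Icc u v)) x := fun hu hv x hx =>
    (hψ x (hs.out hu hv (interior_subset hx))).hasDerivWithinAt
  rcases le_total α β with hle | hle
  · refine monotoneOn_of_hasDerivWithinAt_nonneg (convex_Icc α β) (hcont hα hβ) (hderiv hα hβ)
      (fun x hx => ?_) ⟨le_rfl, hle⟩ ⟨hle, le_rfl⟩ hle
    rw [interior_Icc] at hx
    exact nonneg_of_mul_nonneg_right (hsign x (hs.out hα hβ (Set.Ioo_subset_Icc_self hx)))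
      (sub_pos.2 hx.1)
  · refine antitoneOn_of_hasDerivWithinAt_nonpos (convex_Icc β α) (hcont hβ hα) (hderiv hβ hα)
      (fun x hx => ?_) ⟨le_rfl, hle⟩ ⟨hle, le_rfl⟩ hle
    rw [interior_Icc] at hx
    exact nonpos_of_mul_nonneg_right (hsign x (hs.out hβ hα (Set.Ioo_subset_Icc_self hx)))
      (sub_neg.2 hx.2)

section Bernoulli

def bernoulliPmf (θ : ℝ) (b : Bool) : ℝ := if b then θ else 1 - θ

lemma sum_bernoulliPmf (θ : ℝ) : ∑ b, bernoulliPmf θ b = 1 := by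
  simp [bernoulliPmf]

lemma bernoulliPmf_pos {θ : ℝ} (h₀ : 0 < θ) (h₁ : θ < 1) (b : Bool) : 0 < bernoulliPmf θ b := by
  cases b <;> simp [bernoulliPmf, h₀, h₁]

lemma discreteKL_bernoulliPmf {α β : ℝ} (hα₀ : 0 < α) (hα₁ : α < 1) (hβ₀ : 0 < β)
    (hβ₁ : β < 1) : discreteKL (bernoulliPmf α) (bernoulliPmf β) =
      α * (Real.log α - Real.log β) + (1 - α) * (Real.log (1 - α) - Real.log (1 - β)) := by
  simp only [discreteKL, Fintype.sum_bool, bernoulliPmf, if_true, Bool.false_eq_true, if_false]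
  rw [Real.log_div hα₀.ne' hβ₀.ne', Real.log_div (by linarith) (by linarith)]

lemma discreteKL_bernoulliPmf_le {ε α β : ℝ} (hε : 0 < ε) (hα : α ∈ Set.Icc ε (1 - ε))
    (hβ : β ∈ Set.Icc ε (1 - ε)) :
    discreteKL (bernoulliPmf α) (bernoulliPmf β) ≤ (α - β) ^ 2 / (2 * (ε * (1 - ε))) := by
  obtain ⟨hα₁, hα₂⟩ := hα
  obtain ⟨hβ₁, hβ₂⟩ := hβ
  set e := ε * (1 - ε)
  have he : 0 < e := mul_pos hε (by linarith)
  set ψ := fun s => α * Real.log s + (1 - α) * Real.log (1 - s) + (α - s) ^ 2 / (2 * e)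
  have hderiv : ∀ x ∈ Set.Icc ε (1 - ε),
      HasDerivAt ψ ((x - α) * (e⁻¹ - (x * (1 - x))⁻¹)) x := by
    rintro x ⟨hx₁, hx₂⟩
    have hx : x ≠ 0 := by linarith
    have hx' : 1 - x ≠ 0 := by linarith
    have hlog := (Real.hasDerivAt_log hx).const_mul α
    have hlog' := ((Real.hasDerivAt_log hx').comp x ((hasDerivAt_id x).const_sub 1)).const_mul
      (1 - α)
    have hsq := (((hasDerivAt_id x).const_sub α).pow 2).div_const (2 * e)
    refine ((hlog.add hlog').add hsq).congr_deriv ?_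
    simp only [id, Nat.cast_ofNat]
    field_simp
    ring
  have hmin : ψ α ≤ ψ β := isMinOn_of_hasDerivAt_of_mul_sub_nonneg Set.ordConnected_Icc
    ⟨hα₁, hα₂⟩ hderiv (fun x ⟨hx₁, hx₂⟩ => by
      -- `x (1 - x) ≥ ε (1 - ε)` on `[ε, 1 - ε]`, so `ψ'` has the sign of `x - α`
      have hxe : e ≤ x * (1 - x) := by nlinarith
      rw [← mul_assoc, ← sq]
      exact mul_nonneg (sq_nonneg _) (sub_nonneg.2 (inv_anti₀ he hxe))) ⟨hβ₁, hβ₂⟩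
  simp only [ψ, sub_self, ne_eq, OfNat.ofNat_ne_zero, not_false_eq_true, zero_pow, zero_div,
    add_zero] at hmin
  rw [discreteKL_bernoulliPmf (by linarith) (by linarith) (by linarith) (by linarith)]
  linarith

end Bernoulli

section ProductPmf

variable {ι β : Type*} [Fintype ι] [DecidableEq ι] [Fintype β]

lemma sum_prod_mul_apply (g : ι → β → ℝ) (hg : ∀ i, ∑ x, g i x = 1) (i₀ : ι) (r : β → ℝ) :
    ∑ ξ : ι → β, (∏ i, g i (ξ i)) * r (ξ i₀) = ∑ x, g i₀ x * r x := by
  have hfactor : ∀ ξ : ι → β, (∏ i, g i (ξ i)) * r (ξ i₀) =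
      ∏ i, g i (ξ i) * (if i = i₀ then r (ξ i) else 1) := fun ξ => by
    rw [prod_mul_distrib, prod_ite_eq' univ i₀ (fun i => r (ξ i)), if_pos (mem_univ _)]
  rw [Fintype.sum_congr _ _ hfactor,
    ← Fintype.prod_sum fun i x => g i x * if i = i₀ then r x else 1,
    prod_eq_single i₀ (fun i _ hi => by simp [hi, hg]) (by simp)]
  simp

lemma discreteKL_pi (g h : ι → β → ℝ) (hg : ∀ i, ∑ x, g i x = 1) (hg₀ : ∀ i x, 0 < g i x)
    (hh₀ : ∀ i x, 0 < h i x) :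
    discreteKL (fun ξ : ι → β => ∏ i, g i (ξ i)) (fun ξ => ∏ i, h i (ξ i)) =
      ∑ i, discreteKL (g i) (h i) := by
  have hlog : ∀ ξ : ι → β, Real.log ((∏ i, g i (ξ i)) / ∏ i, h i (ξ i)) =
      ∑ i, Real.log (g i (ξ i) / h i (ξ i)) := fun ξ => by
    rw [← prod_div_distrib, Real.log_prod fun i _ => (div_pos (hg₀ i _) (hh₀ i _)).ne']
  simp only [discreteKL, hlog, mul_sum]
  rw [sum_comm]
  exact sum_congr rfl fun i _ => sum_prod_mul_apply g hg i fun x => Real.log (g i x / h i x)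

end ProductPmf

section CausalKernel

variable {S : Type*} {n : ℕ}

def IsCausal (κ : Fin n → (Fin n → S) → S → ℝ) : Prop :=
  ∀ t a a', (∀ s < t, a s = a' s) → κ t a = κ t a'

def seqPmf (κ : Fin n → (Fin n → S) → S → ℝ) (a : Fin n → S) : ℝ :=
  ∏ t, κ t a (a t)

/-- `x₀` fills the last coordinate, which no kernel of the first `n` steps reads. -/
def initKernel (κ : Fin (n + 1) → (Fin (n + 1) → S) → S → ℝ) (x₀ : S) :
    Fin n → (Fin n → S) → S → ℝ :=
  fun t a => κ t.castSucc (Fin.snoc a x₀)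

lemma snoc_eq_snoc_of_lt_last (a : Fin n → S) (x y : S) {s : Fin (n + 1)} (hs : s < Fin.last n) :
    Fin.snoc (α := fun _ => S) a x s = Fin.snoc (α := fun _ => S) a y s := by
  obtain ⟨s, rfl⟩ := Fin.exists_castSucc_eq.2 (Fin.ne_last_of_lt hs)
  simp only [Fin.snoc_castSucc]

lemma IsCausal.initKernel {κ : Fin (n + 1) → (Fin (n + 1) → S) → S → ℝ} (hκ : IsCausal κ)
    (x₀ : S) : IsCausal (initKernel κ x₀) := by
  intro t a a' h
  refine hκ _ _ _ fun s hs => ?_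
  obtain ⟨s, rfl⟩ := Fin.exists_castSucc_eq.2 (Fin.ne_last_of_lt hs)
  simpa only [Fin.snoc_castSucc] using h s (Fin.castSucc_lt_castSucc_iff.1 hs)

lemma IsCausal.apply_update {κ : Fin n → (Fin n → S) → S → ℝ}
    (hκ : IsCausal κ) (t : Fin n) (a : Fin n → S) (x : S) :
    κ t (Function.update a t x) = κ t a :=
  hκ t _ _ fun _ hs => Function.update_of_ne hs.ne _ _

lemma seqPmf_nonneg {κ : Fin n → (Fin n → S) → S → ℝ} (hκ₀ : ∀ t a x, 0 ≤ κ t a x)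
    (a : Fin n → S) : 0 ≤ seqPmf κ a :=
  prod_nonneg fun t _ => hκ₀ t a _

variable [Fintype S]

lemma sum_seqPmf_mul_snoc {κ : Fin (n + 1) → (Fin (n + 1) → S) → S → ℝ} (hκ : IsCausal κ)
    (x₀ : S) (g : (Fin (n + 1) → S) → ℝ) :
    ∑ a, seqPmf κ a * g a = ∑ a, seqPmf (initKernel κ x₀) a *
      ∑ x, κ (Fin.last n) (Fin.snoc a x₀) x * g (Fin.snoc a x) := by
  have hsnoc : ∀ (a : Fin n → S) x t, t ≤ Fin.last n →
      κ t (Fin.snoc a x) = κ t (Fin.snoc a x₀) := fun a x t ht =>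
    hκ t _ _ fun s hs => snoc_eq_snoc_of_lt_last a x x₀ (lt_of_lt_of_le hs ht)
  rw [← (Fin.snocEquiv fun _ => S).sum_comp, Fintype.sum_prod_type_right]
  refine sum_congr rfl fun a _ => ?_
  rw [mul_sum]
  refine sum_congr rfl fun x _ => ?_
  change seqPmf κ (Fin.snoc a x) * g (Fin.snoc a x) = _
  simp only [seqPmf, initKernel, Fin.prod_univ_castSucc, Fin.snoc_castSucc,
    Fin.snoc_last, hsnoc a x _ (Fin.castSucc_lt_last _).le, hsnoc a x _ le_rfl]
  ring

lemma sum_seqPmf [Nonempty S] {κ : Fin n → (Fin n → S) → S → ℝ} (hκ : IsCausal κ)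
    (hκ₁ : ∀ t a, ∑ x, κ t a x = 1) : ∑ a, seqPmf κ a = 1 := by
  induction n with
  | zero => simp [seqPmf]
  | succ n ih =>
    obtain ⟨x₀⟩ := ‹Nonempty S›
    have h := sum_seqPmf_mul_snoc hκ x₀ fun _ => 1
    simp only [mul_one, hκ₁] at h
    rw [h, ih (hκ.initKernel x₀) fun t a => hκ₁ _ _]

lemma sum_seqPmf_mul_le [Nonempty S] {κ : Fin n → (Fin n → S) → S → ℝ} (hκ : IsCausal κ)
    (hκ₀ : ∀ t a x, 0 ≤ κ t a x) (hκ₁ : ∀ t a, ∑ x, κ t a x = 1) (t : Fin n)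
    {g : (Fin n → S) → ℝ} (hg : ∀ a a', (∀ s ≤ t, a s = a' s) → g a = g a') {C : ℝ}
    (hC : ∀ a, ∑ x, κ t a x * g (Function.update a t x) ≤ C) :
    ∑ a, seqPmf κ a * g a ≤ C := by
  induction n with
  | zero => exact t.elim0
  | succ n ih =>
    obtain ⟨x₀⟩ := ‹Nonempty S›
    rw [sum_seqPmf_mul_snoc hκ x₀]
    induction t using Fin.lastCases with
    | last =>
      have hinner : ∀ a : Fin n → S,
          ∑ x, κ (Fin.last n) (Fin.snoc a x₀) x * g (Fin.snoc a x) ≤ C := fun a => by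
        simpa only [Fin.update_snoc_last] using hC (Fin.snoc a x₀)
      calc _ ≤ ∑ a, seqPmf (initKernel κ x₀) a * C := sum_le_sum fun a _ =>
            mul_le_mul_of_nonneg_left (hinner a) (seqPmf_nonneg (fun t a x => hκ₀ _ _ _) a)
        _ = C := by rw [← sum_mul, sum_seqPmf (hκ.initKernel x₀) fun t a => hκ₁ _ _, one_mul]
    | cast t =>
      have hinner : ∀ a : Fin n → S,
          ∑ x, κ (Fin.last n) (Fin.snoc a x₀) x * g (Fin.snoc a x) = g (Fin.snoc a x₀) :=
        fun a => by
          rw [sum_congr rfl fun x _ => by rw [hg (Fin.snoc a x) (Fin.snoc a x₀) fun s hs =>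
            snoc_eq_snoc_of_lt_last a x x₀ (lt_of_le_of_lt hs (Fin.castSucc_lt_last t))],
            ← sum_mul, hκ₁, one_mul]
      simp only [hinner]
      refine ih (hκ.initKernel x₀) (fun t a x => hκ₀ _ _ _) (fun t a => hκ₁ _ _) t
        (fun a a' h => hg _ _ fun s hs => ?_) fun a => ?_
      · obtain ⟨s, rfl⟩ := Fin.exists_castSucc_eq.2 (Fin.ne_last_of_lt
          (lt_of_le_of_lt hs (Fin.castSucc_lt_last t)))
        simpa only [Fin.snoc_castSucc] using h s (Fin.castSucc_le_castSucc_iff.1 hs)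
      · simpa only [initKernel, Fin.snoc_update] using hC (Fin.snoc a x₀)

theorem discreteKL_seqPmf_le [Nonempty S] {κ ν : Fin n → (Fin n → S) → S → ℝ}
    (hκ : IsCausal κ) (hν : IsCausal ν) (hκ₀ : ∀ t a x, 0 < κ t a x)
    (hκ₁ : ∀ t a, ∑ x, κ t a x = 1) (hν₀ : ∀ t a x, 0 < ν t a x) (C : Fin n → ℝ)
    (hC : ∀ t a, discreteKL (κ t a) (ν t a) ≤ C t) :
    discreteKL (seqPmf κ) (seqPmf ν) ≤ ∑ t, C t := by
  have hlog : ∀ a, Real.log (seqPmf κ a / seqPmf ν a) =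
      ∑ t, Real.log (κ t a (a t) / ν t a (a t)) := fun a => by
    rw [seqPmf, seqPmf, ← prod_div_distrib,
      Real.log_prod fun t _ => (div_pos (hκ₀ t a _) (hν₀ t a _)).ne']
  rw [discreteKL, sum_congr rfl fun a _ => by rw [hlog, mul_sum], sum_comm]
  refine sum_le_sum fun t _ => sum_seqPmf_mul_le hκ (fun t a x => (hκ₀ t a x).le) hκ₁ t
    (fun a a' h => ?_) fun a => ?_
  · rw [hκ t a a' fun s hs => h s hs.le, hν t a a' fun s hs => h s hs.le, h t le_rfl]
  · simp only [Function.update_self, hκ.apply_update, hν.apply_update]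
    exact hC t a

end CausalKernel

section History

variable {S : Type*} {p : ℕ}

lemma histArg_congr {a a' : Fin p → S} (z : Fin p → S) {t : Fin p}
    (h : ∀ s < t, a s = a' s) : histArg a z t = histArg a' z t := by
  funext j
  unfold histArg
  split_ifs with hj
  · exact h _ (by simp only [Fin.lt_def]; omega)
  · rfl

lemma histArg_apply_of_lt (a z y : Fin p → S) {t ℓ : Fin p} (hℓ : ℓ < t) :
    histArg a z t ℓ = histArg a y t ℓ := by
  simp [histArg, Fin.lt_def.1 hℓ]

end History

lemma abs_mbpInner_sub_le {N p : ℕ} (Θ : Fin N → Fin N → Fin p → ℝ) (i : Fin N)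
    {b b' : Fin p → (Fin N → Bool)} {t : Fin p} (h : ∀ ℓ < t, b ℓ = b' ℓ) :
    |mbpInner Θ i b - mbpInner Θ i b'| ≤ ∑ ℓ ∈ univ.filter (t ≤ ·), ∑ j, |Θ i j ℓ| := by
  have hterm : ∀ j ℓ, |Θ i j ℓ * ((if b ℓ j then 1 else 0) - (if b' ℓ j then 1 else 0))| ≤
      if t ≤ ℓ then |Θ i j ℓ| else 0 := fun j ℓ => by
    by_cases hℓ : t ≤ ℓ
    · rw [if_pos hℓ, abs_mul]
      refine mul_le_of_le_one_right (abs_nonneg _) ?_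
      split_ifs <;> norm_num
    · simp [hℓ, h ℓ (not_le.1 hℓ)]
  calc |mbpInner Θ i b - mbpInner Θ i b'|
      = |∑ j, ∑ ℓ, Θ i j ℓ * ((if b ℓ j then 1 else 0) - (if b' ℓ j then 1 else 0))| := by
        simp only [mbpInner, ← sum_sub_distrib, mul_sub]
    _ ≤ ∑ j, ∑ ℓ, if t ≤ ℓ then |Θ i j ℓ| else 0 :=
        (abs_sum_le_sum_abs _ _).trans <| sum_le_sum fun j _ =>
          (abs_sum_le_sum_abs _ _).trans <| sum_le_sum fun ℓ _ => hterm j ℓ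
    _ = ∑ ℓ ∈ univ.filter (t ≤ ·), ∑ j, |Θ i j ℓ| := by
        rw [sum_comm, sum_filter]
        exact sum_congr rfl fun ℓ _ => by split_ifs <;> simp

def blockKernel {S : Type*} {p : ℕ} (q : S → (Fin p → S) → ℝ) (z : Fin p → S) :
    Fin p → (Fin p → S) → S → ℝ :=
  fun t a x => q x (histArg a z t)

lemma isCausal_blockKernel {S : Type*} {p : ℕ} (q : S → (Fin p → S) → ℝ) (z : Fin p → S) :
    IsCausal (blockKernel q z) := fun t _ _ h => by
  unfold blockKernel
  rw [histArg_congr z h]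

section Mbp

variable {N p : ℕ} (Θ : Fin N → Fin N → Fin p → ℝ) {ε : ℝ} {f : ℝ → ℝ}

lemma mbpQ_eq_prod (b : Fin p → (Fin N → Bool)) :
    (mbpQ Θ f · b) = fun ξ => ∏ i, bernoulliPmf (f (mbpInner Θ i b)) (ξ i) := rfl

lemma mbpQ_pos (hε : 0 < ε) (hf : ∀ u, f u ∈ Set.Icc ε (1 - ε)) (ξ : Fin N → Bool)
    (b : Fin p → (Fin N → Bool)) : 0 < mbpQ Θ f ξ b :=
  prod_pos fun i _ => bernoulliPmf_pos (by linarith [(hf (mbpInner Θ i b)).1])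
    (by linarith [(hf (mbpInner Θ i b)).2]) (ξ i)

lemma sum_mbpQ (b : Fin p → (Fin N → Bool)) : ∑ ξ, mbpQ Θ f ξ b = 1 := by
  rw [mbpQ_eq_prod, ← Fintype.prod_sum]
  exact prod_eq_one fun i _ => sum_bernoulliPmf _

lemma discreteKL_mbpQ_le (hε : 0 < ε) (hf : ∀ u, f u ∈ Set.Icc ε (1 - ε))
    (b b' : Fin p → (Fin N → Bool)) :
    discreteKL (mbpQ Θ f · b) (mbpQ Θ f · b') ≤
      ∑ i, (f (mbpInner Θ i b) - f (mbpInner Θ i b')) ^ 2 / (2 * (ε * (1 - ε))) := by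
  have hpos : ∀ u b, 0 < bernoulliPmf (f u) b := fun u =>
    bernoulliPmf_pos (by linarith [(hf u).1]) (by linarith [(hf u).2])
  rw [mbpQ_eq_prod, mbpQ_eq_prod,
    discreteKL_pi _ _ (fun i => sum_bernoulliPmf _) (fun i => hpos _) fun i => hpos _]
  exact sum_le_sum fun i _ => discreteKL_bernoulliPmf_le hε (hf _) (hf _)

lemma sq_sub_le_of_abs_sub_le {f : ℝ → ℝ} {L : ℝ} (hf : ∀ u v, |f u - f v| ≤ L * |u - v|)
    {u v d : ℝ} (h : |u - v| ≤ d) : (f u - f v) ^ 2 ≤ (L * d) ^ 2 :=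
  calc (f u - f v) ^ 2 = |f u - f v| ^ 2 := (sq_abs _).symm
    _ ≤ (L * |u - v|) ^ 2 := pow_le_pow_left₀ (abs_nonneg _) (hf u v) 2
    _ ≤ (L * d) ^ 2 := by
      rw [mul_pow, mul_pow]
      gcongr

lemma discreteKL_blockKernel_mbpQ_le (hε : 0 < ε) (hf : ∀ u, f u ∈ Set.Icc ε (1 - ε)) {L : ℝ}
    (hLip : ∀ u v, |f u - f v| ≤ L * |u - v|) (z y : Fin p → (Fin N → Bool)) (t : Fin p)
    (a : Fin p → (Fin N → Bool)) :
    discreteKL (blockKernel (mbpQ Θ f) z t a) (blockKernel (mbpQ Θ f) y t a) ≤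
      ∑ i, (L * ∑ ℓ ∈ univ.filter (t ≤ ·), ∑ j, |Θ i j ℓ|) ^ 2 / (2 * (ε * (1 - ε))) := by
  have he : 0 < ε * (1 - ε) := mul_pos hε (by linarith [(hf 0).1, (hf 0).2])
  refine (discreteKL_mbpQ_le Θ hε hf _ _).trans <| sum_le_sum fun i _ => ?_
  have hinner := abs_mbpInner_sub_le Θ i (t := t) fun ℓ hℓ => histArg_apply_of_lt a z y hℓ
  exact div_le_div_of_nonneg_right (sq_sub_le_of_abs_sub_le hLip hinner) (by positivity)

end Mbp

theorem stmt7_general {N p : ℕ}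
    (Θ : Fin N → Fin N → Fin p → ℝ) (ε Lf : ℝ)
    (hε0 : 0 < ε)
    (f : ℝ → ℝ) (hf : ∀ u, f u ∈ Set.Icc ε (1 - ε))
    (hLip : ∀ u v, |f u - f v| ≤ Lf * |u - v|)
    (z y : Fin p → (Fin N → Bool)) :
    (∑ a : Fin p → (Fin N → Bool),
        blockPmf (mbpQ Θ f) z a *
          Real.log (blockPmf (mbpQ Θ f) z a / blockPmf (mbpQ Θ f) y a)) ≤
      (3 * Lf ^ 2 / (4 * ε * (1 - ε))) *
        ∑ t : Fin p, ∑ i : Fin N,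
          (∑ ℓ ∈ Finset.univ.filter (fun ℓ : Fin p => t ≤ ℓ),
            ∑ j : Fin N, |Θ i j ℓ|) ^ 2 := by
  set d : Fin p → Fin N → ℝ := fun t i => ∑ ℓ ∈ univ.filter (t ≤ ·), ∑ j, |Θ i j ℓ|
  have he : 0 < ε * (1 - ε) := mul_pos hε0 (by linarith [(hf 0).1, (hf 0).2])
  have hq : ∀ b x, 0 < mbpQ Θ f x b := fun b x => mbpQ_pos Θ hε0 hf x b
  calc discreteKL (seqPmf (blockKernel (mbpQ Θ f) z)) (seqPmf (blockKernel (mbpQ Θ f) y))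
      ≤ ∑ t, ∑ i, (Lf * d t i) ^ 2 / (2 * (ε * (1 - ε))) :=
        discreteKL_seqPmf_le (isCausal_blockKernel (mbpQ Θ f) z)
          (isCausal_blockKernel (mbpQ Θ f) y)
          (fun t a => hq _) (fun t a => sum_mbpQ Θ _) (fun t a => hq _) _
          (discreteKL_blockKernel_mbpQ_le Θ hε0 hf hLip z y)
    _ ≤ _ := by
      simp only [mul_sum]
      gcongr with t _ i _
      have hconst : 3 * Lf ^ 2 / (4 * ε * (1 - ε)) * d t i ^ 2 =
          (Lf * d t i) ^ 2 / (2 * (ε * (1 - ε))) * (3 / 2) := by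
        field_simp
        ring
      rw [hconst]
      exact le_mul_of_one_le_right (by positivity) (by norm_num)

/-- KL divergence between block distributions of the multivariate
Bernoulli process is bounded by
`(3L_f²/(4ε(1−ε))) Σ_t Σ_i (Σ_{ℓ=t}^p Σ_j |Θ_{ijℓ}|)²`. -/
theorem stmt7 {N p : ℕ} (hN : 1 ≤ N) (hp : 1 ≤ p)
    (Θ : Fin N → Fin N → Fin p → ℝ) (ε Lf : ℝ)
    (hε0 : 0 < ε) (hε1 : ε < 1 / 2) (hLf : 0 < Lf)
    (f : ℝ → ℝ) (hf : ∀ u, f u ∈ Set.Icc ε (1 - ε))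
    (hLip : ∀ u v, |f u - f v| ≤ Lf * |u - v|)
    (z y : Fin p → (Fin N → Bool)) :
    (∑ a : Fin p → (Fin N → Bool),
        blockPmf (mbpQ Θ f) z a *
          Real.log (blockPmf (mbpQ Θ f) z a / blockPmf (mbpQ Θ f) y a)) ≤
      (3 * Lf ^ 2 / (4 * ε * (1 - ε))) *
        ∑ t : Fin p, ∑ i : Fin N,
          (∑ ℓ ∈ Finset.univ.filter (fun ℓ : Fin p => t ≤ ℓ),
            ∑ j : Fin N, |Θ i j ℓ|) ^ 2 :=
  stmt7_general Θ ε Lf hε0 f hf hLip z y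
end

section
/- Fix integers N ≥ 1, p ≥ 1, a tensor Θ ∈ ℝ^{N×N×p}, ε ∈ (0,1/2), L_f > 0, and a function f : ℝ → [ε, 1−ε] that is L_f-Lipschitz. Let S = {0,1}^N and define the MBP conditional pmf q and block pmfs p_z as in the context. Then the maximal total-variation distance between block distributions satisfies max_{z,y ∈ S^p} (1/2) Σ_{a∈S^p} |p_z(a) − p_y(a)| ≤ g_f(Θ), where g_f(Θ) := ( (3L_f²/(2ε)) · Σ_{ℓ=1}^p Σ_{i=1}^N ( Σ_{j=1}^N Σ_{k=ℓ}^p |Θ_{ijk}| )² )^{1/2}. (Equivalently, the Dobrushin ergodicity coefficient of the p-step block kernel of the multivariate Bernoulli process is at most g_f(Θ).) -/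
open Finset

section helpers
variable {S : Type*} [Fintype S] {p : ℕ}

lemma resample (F : (Fin p → S) → ℝ) (k : Fin p) :
    ∑ a : Fin p → S, ∑ x : S, F (Function.update a k x)
      = (Fintype.card S : ℝ) * ∑ a : Fin p → S, F a := by
  classical
  have hinv : Function.Involutive
      (fun ax : (Fin p → S) × S => (Function.update ax.1 k ax.2, ax.1 k)) := by
    rintro ⟨a, x⟩
    simp [Function.update_idem, Function.update_eq_self]
  have h := Fintype.sum_equiv hinv.toPerm
    (fun ax : (Fin p → S) × S => F ax.1)
    (fun ax : (Fin p → S) × S => F (Function.update ax.1 k ax.2)) ?_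
  · calc ∑ a : Fin p → S, ∑ x : S, F (Function.update a k x)
        = ∑ ax : (Fin p → S) × S, F (Function.update ax.1 k ax.2) := by
          rw [Fintype.sum_prod_type]
      _ = ∑ ax : (Fin p → S) × S, F ax.1 := h.symm
      _ = (Fintype.card S : ℝ) * ∑ a : Fin p → S, F a := by
          rw [Fintype.sum_prod_type]
          simp [Finset.sum_const, nsmul_eq_mul, Finset.mul_sum]
  · rintro ⟨a, x⟩
    simp [Function.Involutive.toPerm]

lemma hist_update (a z : Fin p → S) (k i : Fin p) (hi : (i : ℕ) ≤ (k : ℕ)) (x : S) :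
    histArg (Function.update a k x) z i = histArg a z i := by
  classical
  funext j
  unfold histArg
  split_ifs with h
  · rw [Function.update_of_ne]
    apply Fin.ne_of_val_ne
    simp only [Fin.val_mk]
    omega
  · rfl

lemma prod_ge_one_sub_sum {ι : Type*} (s : Finset ι) (x h : ι → ℝ)
    (hx0 : ∀ i ∈ s, 0 ≤ x i) (hx1 : ∀ i ∈ s, x i ≤ 1)
    (hh : ∀ i ∈ s, 1 - h i ≤ x i) :
    1 - ∑ i ∈ s, h i ≤ ∏ i ∈ s, x i := by
  classical
  induction s using Finset.induction_on with
  | empty => simp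
  | @insert a s ha ih =>
    rw [Finset.sum_insert ha, Finset.prod_insert ha]
    have h1 : 1 - ∑ i ∈ s, h i ≤ ∏ i ∈ s, x i :=
      ih (fun i hi => hx0 i (mem_insert_of_mem hi)) (fun i hi => hx1 i (mem_insert_of_mem hi))
        (fun i hi => hh i (mem_insert_of_mem hi))
    have h2 : 0 ≤ ∏ i ∈ s, x i := Finset.prod_nonneg fun i hi => hx0 i (mem_insert_of_mem hi)
    have h3 : ∏ i ∈ s, x i ≤ 1 :=
      Finset.prod_le_one (fun i hi => hx0 i (mem_insert_of_mem hi))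
        (fun i hi => hx1 i (mem_insert_of_mem hi))
    have h4 : 0 ≤ ∑ i ∈ s, h i :=
      Finset.sum_nonneg fun i hi => by
        have := hh i (mem_insert_of_mem hi); have := hx1 i (mem_insert_of_mem hi); linarith
    have h5 := hx0 a (mem_insert_self a s)
    have h6 := hx1 a (mem_insert_self a s)
    have h7 := hh a (mem_insert_self a s)
    nlinarith [mul_le_mul_of_nonneg_left h3 h5]

lemma sqrt_prod' {ι : Type*} (s : Finset ι) (f : ι → ℝ) (h : ∀ i ∈ s, 0 ≤ f i) :
    Real.sqrt (∏ i ∈ s, f i) = ∏ i ∈ s, Real.sqrt (f i) := by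
  classical
  induction s using Finset.induction_on with
  | empty => simp
  | @insert a s ha ih =>
    rw [Finset.prod_insert ha, Finset.prod_insert ha,
      Real.sqrt_mul (h a (mem_insert_self a s)),
      ih (fun i hi => h i (mem_insert_of_mem hi))]

end helpers

section chain
variable {S : Type*} [Fintype S] [Nonempty S] {p : ℕ}

lemma filter_succ (k : ℕ) (hk : k < p) :
    univ.filter (fun i : Fin p => (i : ℕ) < k + 1)
      = insert ⟨k, hk⟩ (univ.filter fun i : Fin p => (i : ℕ) < k) := by
  ext i
  simp [Fin.ext_iff]
  omega

lemma chain_sum_eq (q : S → (Fin p → S) → ℝ) (z : Fin p → S)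
    (hq : ∀ b, ∑ ξ : S, q ξ b = 1) (k : ℕ) (hk : k ≤ p) :
    ∑ a : Fin p → S, ∏ i ∈ univ.filter (fun i : Fin p => (i : ℕ) < k),
        q (a i) (histArg a z i)
      = (Fintype.card S : ℝ) ^ (p - k) := by
  classical
  induction k with
  | zero =>
    simp only [Nat.not_lt_zero, filter_false_of_mem (fun i _ => Nat.not_lt_zero _), Finset.prod_empty]
    simp [Finset.card_univ]
  | succ k ih =>
    have hkp : k < p := hk
    set k' : Fin p := ⟨k, hkp⟩ with hk'
    have hcard : (0:ℝ) < (Fintype.card S : ℝ) := by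
      exact_mod_cast Fintype.card_pos
    apply mul_left_cancel₀ (ne_of_gt hcard)
    have key : (Fintype.card S : ℝ) *
        ∑ a : Fin p → S, ∏ i ∈ univ.filter (fun i : Fin p => (i : ℕ) < k + 1),
          q (a i) (histArg a z i)
        = ∑ a : Fin p → S, ∏ i ∈ univ.filter (fun i : Fin p => (i : ℕ) < k),
            q (a i) (histArg a z i) := by
      rw [← resample (fun a => ∏ i ∈ univ.filter (fun i : Fin p => (i : ℕ) < k + 1),
        q (a i) (histArg a z i)) k']
      refine Finset.sum_congr rfl fun a _ => ?_
      have hstep : ∀ x : S, ∏ i ∈ univ.filter (fun i : Fin p => (i : ℕ) < k + 1),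
          q ((Function.update a k' x) i) (histArg (Function.update a k' x) z i)
          = (∏ i ∈ univ.filter (fun i : Fin p => (i : ℕ) < k),
              q (a i) (histArg a z i)) * q x (histArg a z k') := by
        intro x
        rw [filter_succ k hkp, Finset.prod_insert (by simp)]
        rw [Function.update_self, hist_update a z k' k' (le_refl _)]
        rw [mul_comm]
        congr 1
        refine Finset.prod_congr rfl fun i hi => ?_
        simp only [mem_filter] at hi
        have hik : (i : ℕ) ≤ (k' : ℕ) := by
          simp only [hk', Fin.val_mk]; omega
        have hik' : i ≠ k' := by
          apply Fin.ne_of_val_ne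
          simp only [hk', Fin.val_mk]; omega
        rw [Function.update_of_ne hik', hist_update a z k' i hik]
      calc ∑ x : S, ∏ i ∈ univ.filter (fun i : Fin p => (i : ℕ) < k + 1),
            q ((Function.update a k' x) i) (histArg (Function.update a k' x) z i)
          = ∑ x : S, (∏ i ∈ univ.filter (fun i : Fin p => (i : ℕ) < k),
              q (a i) (histArg a z i)) * q x (histArg a z k') := by
            exact Finset.sum_congr rfl fun x _ => hstep x
        _ = (∏ i ∈ univ.filter (fun i : Fin p => (i : ℕ) < k),
              q (a i) (histArg a z i)) * ∑ x : S, q x (histArg a z k') := by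
            rw [Finset.mul_sum]
        _ = ∏ i ∈ univ.filter (fun i : Fin p => (i : ℕ) < k),
              q (a i) (histArg a z i) := by rw [hq, mul_one]
    rw [key, ih (le_of_lt hkp)]
    rw [← pow_succ']
    congr 1
    omega

lemma chain_sum_ge (q : S → (Fin p → S) → ℝ) (z y : Fin p → S) (δ : Fin p → ℝ)
    (hqnn : ∀ ξ b, 0 ≤ q ξ b) (hδ : ∀ i, 0 ≤ δ i)
    (H : ∀ (i : Fin p) (b b' : Fin p → S), (∀ j : Fin p, (j : ℕ) < (i : ℕ) → b j = b' j) →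
        1 - δ i ≤ ∑ ξ : S, Real.sqrt (q ξ b * q ξ b'))
    (k : ℕ) (hk : k ≤ p) :
    (Fintype.card S : ℝ) ^ (p - k) *
        (1 - ∑ i ∈ univ.filter (fun i : Fin p => (i : ℕ) < k), δ i)
      ≤ ∑ a : Fin p → S, ∏ i ∈ univ.filter (fun i : Fin p => (i : ℕ) < k),
          Real.sqrt (q (a i) (histArg a z i) * q (a i) (histArg a y i)) := by
  classical
  induction k with
  | zero =>
    have hemp : univ.filter (fun i : Fin p => (i : ℕ) < 0) = ∅ :=
      Finset.filter_false_of_mem (fun i _ => Nat.not_lt_zero _)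
    rw [hemp]
    simp [Finset.card_univ, Fintype.card_fun]
  | succ k ih =>
    have hkp : k < p := hk
    set k' : Fin p := ⟨k, hkp⟩ with hk'
    have hcard : (0:ℝ) < (Fintype.card S : ℝ) := by exact_mod_cast Fintype.card_pos
    have hsqnn : ∀ (a : Fin p → S) (s : Finset (Fin p)), 0 ≤ ∏ i ∈ s,
        Real.sqrt (q (a i) (histArg a z i) * q (a i) (histArg a y i)) :=
      fun a s => Finset.prod_nonneg fun i _ => Real.sqrt_nonneg _
    -- If the slack is nonpositive, trivial
    by_cases hpos : 1 - ∑ i ∈ univ.filter (fun i : Fin p => (i : ℕ) < k + 1), δ i ≤ 0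
    · calc (Fintype.card S : ℝ) ^ (p - (k+1)) *
          (1 - ∑ i ∈ univ.filter (fun i : Fin p => (i : ℕ) < k + 1), δ i) ≤ 0 := by
            apply mul_nonpos_of_nonneg_of_nonpos (by positivity) hpos
        _ ≤ _ := Finset.sum_nonneg fun a _ => hsqnn a _
    push_neg at hpos
    have hδk : δ k' ≤ 1 := by
      have h1 : δ k' ≤ ∑ i ∈ univ.filter (fun i : Fin p => (i : ℕ) < k + 1), δ i := by
        apply Finset.single_le_sum (fun i _ => hδ i)
        simp [hk', Fin.val_mk]
      linarith
    have hδs : ∑ i ∈ univ.filter (fun i : Fin p => (i : ℕ) < k), δ i ≤ 1 := by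
      have h1 : ∑ i ∈ univ.filter (fun i : Fin p => (i : ℕ) < k), δ i
          ≤ ∑ i ∈ univ.filter (fun i : Fin p => (i : ℕ) < k + 1), δ i := by
        apply Finset.sum_le_sum_of_subset_of_nonneg
        · intro i hi; simp only [mem_filter, mem_univ, true_and] at hi ⊢; omega
        · intro i _ _; exact hδ i
      linarith
    have hδsnn : 0 ≤ ∑ i ∈ univ.filter (fun i : Fin p => (i : ℕ) < k), δ i :=
      Finset.sum_nonneg fun i _ => hδ i
    apply le_of_mul_le_mul_left _ hcard
    have key : (Fintype.card S : ℝ) *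
        ∑ a : Fin p → S, ∏ i ∈ univ.filter (fun i : Fin p => (i : ℕ) < k + 1),
          Real.sqrt (q (a i) (histArg a z i) * q (a i) (histArg a y i))
        ≥ (1 - δ k') * ∑ a : Fin p → S, ∏ i ∈ univ.filter (fun i : Fin p => (i : ℕ) < k),
            Real.sqrt (q (a i) (histArg a z i) * q (a i) (histArg a y i)) := by
      rw [← resample (fun a => ∏ i ∈ univ.filter (fun i : Fin p => (i : ℕ) < k + 1),
        Real.sqrt (q (a i) (histArg a z i) * q (a i) (histArg a y i))) k']
      rw [Finset.mul_sum]
      refine Finset.sum_le_sum fun a _ => ?_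
      have hstep : ∀ x : S, ∏ i ∈ univ.filter (fun i : Fin p => (i : ℕ) < k + 1),
          Real.sqrt (q ((Function.update a k' x) i) (histArg (Function.update a k' x) z i) *
            q ((Function.update a k' x) i) (histArg (Function.update a k' x) y i))
          = (∏ i ∈ univ.filter (fun i : Fin p => (i : ℕ) < k),
              Real.sqrt (q (a i) (histArg a z i) * q (a i) (histArg a y i))) *
            Real.sqrt (q x (histArg a z k') * q x (histArg a y k')) := by
        intro x
        rw [filter_succ k hkp, Finset.prod_insert (by simp)]
        rw [Function.update_self, hist_update a z k' k' (le_refl _),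
          hist_update a y k' k' (le_refl _), mul_comm]
        congr 1
        refine Finset.prod_congr rfl fun i hi => ?_
        simp only [mem_filter] at hi
        have hik : (i : ℕ) ≤ (k' : ℕ) := by simp only [hk', Fin.val_mk]; omega
        have hik' : i ≠ k' := by
          apply Fin.ne_of_val_ne; simp only [hk', Fin.val_mk]; omega
        rw [Function.update_of_ne hik', hist_update a z k' i hik,
          hist_update a y k' i hik]
      have hagree : ∀ j : Fin p, (j : ℕ) < (k' : ℕ) → histArg a z k' j = histArg a y k' j := by
        intro j hj
        unfold histArg
        rw [if_pos hj, if_pos hj]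
      calc ∑ x : S, ∏ i ∈ univ.filter (fun i : Fin p => (i : ℕ) < k + 1),
            Real.sqrt (q ((Function.update a k' x) i) (histArg (Function.update a k' x) z i) *
              q ((Function.update a k' x) i) (histArg (Function.update a k' x) y i))
          = (∏ i ∈ univ.filter (fun i : Fin p => (i : ℕ) < k),
              Real.sqrt (q (a i) (histArg a z i) * q (a i) (histArg a y i))) *
            ∑ x : S, Real.sqrt (q x (histArg a z k') * q x (histArg a y k')) := by
            rw [Finset.mul_sum]
            exact Finset.sum_congr rfl fun x _ => hstep x
        _ ≥ (∏ i ∈ univ.filter (fun i : Fin p => (i : ℕ) < k),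
              Real.sqrt (q (a i) (histArg a z i) * q (a i) (histArg a y i))) * (1 - δ k') := by
            exact mul_le_mul_of_nonneg_left (H k' _ _ hagree) (hsqnn a _)
        _ = (1 - δ k') * ∏ i ∈ univ.filter (fun i : Fin p => (i : ℕ) < k),
              Real.sqrt (q (a i) (histArg a z i) * q (a i) (histArg a y i)) := by ring
    refine le_trans ?_ key
    have ih' := ih (le_of_lt hkp)
    have h2 : (1 - δ k') * ((Fintype.card S : ℝ) ^ (p - k) *
        (1 - ∑ i ∈ univ.filter (fun i : Fin p => (i : ℕ) < k), δ i))
        ≤ (1 - δ k') * ∑ a : Fin p → S, ∏ i ∈ univ.filter (fun i : Fin p => (i : ℕ) < k),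
            Real.sqrt (q (a i) (histArg a z i) * q (a i) (histArg a y i)) :=
      mul_le_mul_of_nonneg_left ih' (by linarith)
    refine le_trans ?_ h2
    have hsum : ∑ i ∈ univ.filter (fun i : Fin p => (i : ℕ) < k + 1), δ i
        = δ k' + ∑ i ∈ univ.filter (fun i : Fin p => (i : ℕ) < k), δ i := by
      rw [filter_succ k hkp, Finset.sum_insert (by simp)]
    have hpow : (Fintype.card S : ℝ) ^ (p - k)
        = (Fintype.card S : ℝ) * (Fintype.card S : ℝ) ^ (p - (k + 1)) := by
      rw [← pow_succ']
      congr 1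
      omega
    rw [hsum, hpow]
    have hδknn := hδ k'
    nlinarith [mul_nonneg (mul_nonneg hδknn hδsnn)
      (mul_nonneg (le_of_lt hcard) (pow_nonneg (le_of_lt hcard) (p - (k+1))))]
end chain

section mbphelpers
variable {N p : ℕ} (Θ : Fin N → Fin N → Fin p → ℝ) {ε : ℝ} {f : ℝ → ℝ}

-- scalar Bernoulli affinity bounds
lemma bern_le_one {u v : ℝ} (hu0 : 0 ≤ u) (hu1 : u ≤ 1) (hv0 : 0 ≤ v) (hv1 : v ≤ 1) :
    Real.sqrt (u * v) + Real.sqrt ((1 - u) * (1 - v)) ≤ 1 := by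
  have h1 : Real.sqrt (u * v) ≤ (u + v) / 2 := by
    rw [show (u + v) / 2 = Real.sqrt (((u + v) / 2) ^ 2) from
      (Real.sqrt_sq (by linarith)).symm]
    apply Real.sqrt_le_sqrt
    nlinarith [sq_nonneg (u - v)]
  have h2 : Real.sqrt ((1 - u) * (1 - v)) ≤ ((1 - u) + (1 - v)) / 2 := by
    rw [show ((1 - u) + (1 - v)) / 2 = Real.sqrt ((((1 - u) + (1 - v)) / 2) ^ 2) from
      (Real.sqrt_sq (by linarith)).symm]
    apply Real.sqrt_le_sqrt
    nlinarith [sq_nonneg (u - v)]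
  linarith

lemma bern_gap {ε u v : ℝ} (hε : 0 < ε) (hu : ε ≤ u) (hv : ε ≤ v) :
    (u + v) / 2 - (u - v) ^ 2 / (8 * ε) ≤ Real.sqrt (u * v) := by
  have hu0 : (0:ℝ) ≤ u := le_trans (le_of_lt hε) hu
  have hv0 : (0:ℝ) ≤ v := le_trans (le_of_lt hε) hv
  set A := Real.sqrt u with hA
  set B := Real.sqrt v with hB
  set E := Real.sqrt ε with hE
  have hA2 : A ^ 2 = u := Real.sq_sqrt hu0
  have hB2 : B ^ 2 = v := Real.sq_sqrt hv0
  have hE2 : E ^ 2 = ε := Real.sq_sqrt (le_of_lt hε)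
  have hAE : E ≤ A := Real.sqrt_le_sqrt hu
  have hBE : E ≤ B := Real.sqrt_le_sqrt hv
  have hEpos : 0 < E := Real.sqrt_pos.mpr hε
  have hmul : Real.sqrt (u * v) = A * B := Real.sqrt_mul hu0 v
  rw [hmul]
  have key : ((u + v) / 2 - A * B) * (8 * ε) ≤ (u - v) ^ 2 := by
    rw [← hA2, ← hB2, ← hE2]
    nlinarith [sq_nonneg (A - B), sq_nonneg (A + B - 2*E), mul_nonneg (sq_nonneg (A - B)) (sq_nonneg (A + B - 2*E)), mul_pos hEpos hEpos, mul_nonneg (mul_nonneg (le_of_lt hEpos) (le_of_lt hEpos)) (sq_nonneg (A - B)), mul_nonneg (mul_nonneg (add_nonneg (Real.sqrt_nonneg u) (Real.sqrt_nonneg v)) (le_of_lt hEpos)) (sq_nonneg (A - B))]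

  have := (le_div_iff₀ (show (0:ℝ) < 8 * ε by linarith)).mpr key
  linarith

lemma bern_aff_ge {ε u v : ℝ} (hε : 0 < ε) (hu : ε ≤ u) (hu1 : u ≤ 1 - ε)
    (hv : ε ≤ v) (hv1 : v ≤ 1 - ε) :
    1 - (u - v) ^ 2 / (4 * ε) ≤ Real.sqrt (u * v) + Real.sqrt ((1 - u) * (1 - v)) := by
  have h1 := bern_gap hε hu hv
  have h2 := bern_gap hε (by linarith : ε ≤ 1 - u) (by linarith : ε ≤ 1 - v)
  have : ((1 - u) - (1 - v)) ^ 2 = (u - v) ^ 2 := by ring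
  rw [this] at h2
  have h3 : (u - v)^2 / (4 * ε) = (u - v)^2 / (8 * ε) + (u - v)^2 / (8 * ε) := by
    field_simp
    ring
  linarith

lemma mbpQ_nonneg (hε0 : 0 < ε) (hf : ∀ u, f u ∈ Set.Icc ε (1 - ε))
    (ξ : Fin N → Bool) (b : Fin p → (Fin N → Bool)) : 0 ≤ mbpQ Θ f ξ b := by
  apply Finset.prod_nonneg
  intro i _
  rcases hf (mbpInner Θ i b) with ⟨h1, h2⟩
  split_ifs <;> linarith

lemma mbpQ_sum (hε0 : 0 < ε) (hf : ∀ u, f u ∈ Set.Icc ε (1 - ε))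
    (b : Fin p → (Fin N → Bool)) : ∑ ξ : Fin N → Bool, mbpQ Θ f ξ b = 1 := by
  classical
  have h := Finset.prod_univ_sum (fun _ : Fin N => (univ : Finset Bool))
    (fun i x => if x then f (mbpInner Θ i b) else 1 - f (mbpInner Θ i b))
  rw [Fintype.piFinset_univ] at h
  calc ∑ ξ : Fin N → Bool, mbpQ Θ f ξ b
      = ∏ i : Fin N, ∑ x : Bool,
          (if x then f (mbpInner Θ i b) else 1 - f (mbpInner Θ i b)) := by
        rw [h]; rfl
    _ = ∏ i : Fin N, (1 : ℝ) := by
        refine Finset.prod_congr rfl fun i _ => ?_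
        rw [Fintype.sum_bool]
        norm_num
    _ = 1 := Finset.prod_const_one

lemma inner_diff (ℓ : Fin p) (b b' : Fin p → (Fin N → Bool))
    (hag : ∀ j : Fin p, (j : ℕ) < (ℓ : ℕ) → b j = b' j) (i : Fin N) :
    |mbpInner Θ i b - mbpInner Θ i b'|
      ≤ ∑ j : Fin N, ∑ k ∈ univ.filter (fun k : Fin p => ℓ ≤ k), |Θ i j k| := by
  classical
  rw [mbpInner, mbpInner, ← Finset.sum_sub_distrib]
  refine le_trans (Finset.abs_sum_le_sum_abs _ _) (Finset.sum_le_sum fun j _ => ?_)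
  rw [← Finset.sum_sub_distrib]
  refine le_trans (Finset.abs_sum_le_sum_abs _ _) ?_
  calc ∑ k : Fin p, |Θ i j k * (if b k j then (1:ℝ) else 0)
          - Θ i j k * (if b' k j then 1 else 0)|
      ≤ ∑ k : Fin p, (if ℓ ≤ k then |Θ i j k| else 0) := ?_
    _ = ∑ k ∈ univ.filter (fun k : Fin p => ℓ ≤ k), |Θ i j k| :=
        (Finset.sum_filter _ _).symm
  refine Finset.sum_le_sum fun k _ => ?_
  by_cases hk : ℓ ≤ k
  · rw [if_pos hk, ← mul_sub, abs_mul]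
    have : |(if b k j then (1:ℝ) else 0) - (if b' k j then 1 else 0)| ≤ 1 := by
      split_ifs <;> norm_num
    calc |Θ i j k| * |(if b k j then (1:ℝ) else 0) - (if b' k j then 1 else 0)|
        ≤ |Θ i j k| * 1 := mul_le_mul_of_nonneg_left this (abs_nonneg _)
      _ = |Θ i j k| := mul_one _
  · rw [if_neg hk]
    have hbb : b k = b' k := hag k (by
      rcases Fin.lt_or_le k ℓ with h | h
      · exact h
      · exact absurd h hk)
    rw [hbb]
    simp

lemma per_step (hε0 : 0 < ε) (hLf : 0 < Lf) (hf : ∀ u, f u ∈ Set.Icc ε (1 - ε))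
    (hLip : ∀ u v, |f u - f v| ≤ Lf * |u - v|)
    (ℓ : Fin p) (b b' : Fin p → (Fin N → Bool))
    (hag : ∀ j : Fin p, (j : ℕ) < (ℓ : ℕ) → b j = b' j) :
    1 - (∑ i : Fin N, (Lf * ∑ j : Fin N, ∑ k ∈ univ.filter (fun k : Fin p => ℓ ≤ k),
          |Θ i j k|) ^ 2) / (4 * ε)
      ≤ ∑ ξ : Fin N → Bool, Real.sqrt (mbpQ Θ f ξ b * mbpQ Θ f ξ b') := by
  classical
  have hε1' : ε ≤ 1 - ε := le_trans (hf 0).1 (by linarith [(hf 0).2, (hf 0).1])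
  set u : Fin N → ℝ := fun i => f (mbpInner Θ i b) with hu
  set v : Fin N → ℝ := fun i => f (mbpInner Θ i b') with hv
  have hub : ∀ i, ε ≤ u i ∧ u i ≤ 1 - ε := fun i => ⟨(hf _).1, (hf _).2⟩
  have hvb : ∀ i, ε ≤ v i ∧ v i ≤ 1 - ε := fun i => ⟨(hf _).1, (hf _).2⟩
  -- rewrite each sqrt as a product
  have hsq : ∀ ξ : Fin N → Bool, Real.sqrt (mbpQ Θ f ξ b * mbpQ Θ f ξ b')
      = ∏ i : Fin N, Real.sqrt ((if ξ i then u i else 1 - u i) *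
          (if ξ i then v i else 1 - v i)) := by
    intro ξ
    rw [mbpQ, mbpQ, ← Finset.prod_mul_distrib, sqrt_prod']
    intro i _
    have h1 := hub i; have h2 := hvb i
    split_ifs <;> nlinarith [h1.1, h1.2, h2.1, h2.2]
  rw [Finset.sum_congr rfl fun ξ _ => hsq ξ]
  have hps := Finset.prod_univ_sum (fun _ : Fin N => (univ : Finset Bool))
    (fun i x => Real.sqrt ((if x then u i else 1 - u i) * (if x then v i else 1 - v i)))
  rw [Fintype.piFinset_univ] at hps
  rw [← hps]
  have hfac : ∀ i : Fin N, (∑ x : Bool, Real.sqrt ((if x then u i else 1 - u i) *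
      (if x then v i else 1 - v i)))
      = Real.sqrt (u i * v i) + Real.sqrt ((1 - u i) * (1 - v i)) := by
    intro i
    rw [Fintype.sum_bool]
    norm_num [add_comm]
  rw [Finset.prod_congr rfl fun i _ => hfac i, Finset.sum_div]
  apply prod_ge_one_sub_sum
  · intro i _
    positivity
  · intro i _
    exact bern_le_one (by linarith [(hub i).1]) (by linarith [(hub i).2])
      (by linarith [(hvb i).1]) (by linarith [(hvb i).2])
  · intro i _
    have hb1 := bern_aff_ge hε0 (hub i).1 (hub i).2 (hvb i).1 (hvb i).2
    refine le_trans ?_ hb1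
    have hd : |u i - v i| ≤ Lf * ∑ j : Fin N, ∑ k ∈ univ.filter
        (fun k : Fin p => ℓ ≤ k), |Θ i j k| :=
      le_trans (hLip _ _) (mul_le_mul_of_nonneg_left (inner_diff Θ ℓ b b' hag i)
        (le_of_lt hLf))
    have hsq2 : (u i - v i) ^ 2 ≤ (Lf * ∑ j : Fin N, ∑ k ∈ univ.filter
        (fun k : Fin p => ℓ ≤ k), |Θ i j k|) ^ 2 := by
      rw [← sq_abs (u i - v i)]
      exact pow_le_pow_left₀ (abs_nonneg _) hd 2
    have : (u i - v i) ^ 2 / (4 * ε) ≤ (Lf * ∑ j : Fin N, ∑ k ∈ univ.filter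
        (fun k : Fin p => ℓ ≤ k), |Θ i j k|) ^ 2 / (4 * ε) := by
      apply div_le_div_of_nonneg_right hsq2 -- check name
      linarith
    linarith

end mbphelpers

/-- the maximal total-variation distance between block distributions of
the MBP (equivalently, the Dobrushin coefficient of its `p`-step block kernel) is at
most `g_f(Θ) = √((3L_f²/(2ε)) Σ_ℓ Σ_i (Σ_j Σ_{k=ℓ}^p |Θ_{ijk}|)²)`. -/
theorem stmt8 {N p : ℕ} (hN : 1 ≤ N) (hp : 1 ≤ p)
    (Θ : Fin N → Fin N → Fin p → ℝ) (ε Lf : ℝ)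
    (hε0 : 0 < ε) (hε1 : ε < 1 / 2) (hLf : 0 < Lf)
    (f : ℝ → ℝ) (hf : ∀ u, f u ∈ Set.Icc ε (1 - ε))
    (hLip : ∀ u v, |f u - f v| ≤ Lf * |u - v|) :
    ∀ z y : Fin p → (Fin N → Bool),
      (1 / 2) * (∑ a : Fin p → (Fin N → Bool),
          |blockPmf (mbpQ Θ f) z a - blockPmf (mbpQ Θ f) y a|) ≤
        Real.sqrt ((3 * Lf ^ 2 / (2 * ε)) *
          ∑ ℓ : Fin p, ∑ i : Fin N,
            (∑ j : Fin N, ∑ k ∈ Finset.univ.filter (fun k : Fin p => ℓ ≤ k),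
              |Θ i j k|) ^ 2) := by
  classical
  intro z y
  set Q : (Fin N → Bool) → (Fin p → (Fin N → Bool)) → ℝ := mbpQ Θ f with hQdef
  have hQnn : ∀ ξ b, 0 ≤ Q ξ b := fun ξ b => mbpQ_nonneg Θ hε0 hf ξ b
  have hQsum : ∀ b, ∑ ξ : Fin N → Bool, Q ξ b = 1 := fun b => mbpQ_sum Θ hε0 hf b
  have hfilt : univ.filter (fun i : Fin p => (i : ℕ) < p) = univ :=
    Finset.filter_true_of_mem fun i _ => i.isLt
  -- block pmfs are probability vectors
  have hPnn : ∀ (w : Fin p → (Fin N → Bool)) a, 0 ≤ blockPmf Q w a := fun w a =>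
    Finset.prod_nonneg fun i _ => hQnn _ _
  have hPsum : ∀ w : Fin p → (Fin N → Bool),
      ∑ a : Fin p → (Fin N → Bool), blockPmf Q w a = 1 := by
    intro w
    have h := chain_sum_eq Q w hQsum p le_rfl
    rw [hfilt, Nat.sub_self, pow_zero] at h
    rw [← h]
    rfl
  -- abbreviations
  set A : Fin N → Fin p → ℝ := fun i ℓ =>
    ∑ j : Fin N, ∑ k ∈ univ.filter (fun k : Fin p => ℓ ≤ k), |Θ i j k| with hAdef
  set δ : Fin p → ℝ := fun ℓ => (∑ i : Fin N, (Lf * A i ℓ) ^ 2) / (4 * ε) with hδdef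
  have hδnn : ∀ ℓ, 0 ≤ δ ℓ := fun ℓ => by
    rw [hδdef]
    positivity
  -- Hellinger affinity lower bound
  have hρge : 1 - ∑ ℓ : Fin p, δ ℓ ≤ ∑ a : Fin p → (Fin N → Bool),
      Real.sqrt (blockPmf Q z a * blockPmf Q y a) := by
    have H : ∀ (i : Fin p) (b b' : Fin p → (Fin N → Bool)),
        (∀ j : Fin p, (j : ℕ) < (i : ℕ) → b j = b' j) →
        1 - δ i ≤ ∑ ξ : Fin N → Bool, Real.sqrt (Q ξ b * Q ξ b') := by
      intro i b b' hag
      exact per_step Θ hε0 hLf hf hLip i b b' hag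
    have h := chain_sum_ge Q z y δ hQnn hδnn H p le_rfl
    rw [hfilt, Nat.sub_self, pow_zero, one_mul] at h
    refine le_trans h (le_of_eq (Finset.sum_congr rfl fun a _ => ?_))
    rw [blockPmf, blockPmf, ← Finset.prod_mul_distrib,
      sqrt_prod' _ _ (fun i _ => mul_nonneg (hQnn _ _) (hQnn _ _))]
  -- Cauchy–Schwarz step
  set sp : (Fin p → (Fin N → Bool)) → ℝ := fun a => Real.sqrt (blockPmf Q z a) with hsp
  set sq : (Fin p → (Fin N → Bool)) → ℝ := fun a => Real.sqrt (blockPmf Q y a) with hsq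
  set ρ : ℝ := ∑ a : Fin p → (Fin N → Bool),
    Real.sqrt (blockPmf Q z a * blockPmf Q y a) with hρdef
  have hspsq : ∀ a, sp a * sq a = Real.sqrt (blockPmf Q z a * blockPmf Q y a) := by
    intro a
    rw [hsp, hsq, ← Real.sqrt_mul (hPnn z a)]
  have hTterm : ∀ a, |blockPmf Q z a - blockPmf Q y a|
      = |sp a - sq a| * (sp a + sq a) := by
    intro a
    have h1 : blockPmf Q z a = sp a ^ 2 := (Real.sq_sqrt (hPnn z a)).symm
    have h2 : blockPmf Q y a = sq a ^ 2 := (Real.sq_sqrt (hPnn y a)).symm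
    rw [h1, h2, show sp a ^ 2 - sq a ^ 2 = (sp a - sq a) * (sp a + sq a) by ring,
      abs_mul, abs_of_nonneg (add_nonneg (Real.sqrt_nonneg _) (Real.sqrt_nonneg _))]
  have hsum1 : ∑ a : Fin p → (Fin N → Bool), |sp a - sq a| ^ 2 = 2 - 2 * ρ := by
    have : ∀ a : Fin p → (Fin N → Bool), |sp a - sq a| ^ 2
        = blockPmf Q z a + blockPmf Q y a
          - 2 * Real.sqrt (blockPmf Q z a * blockPmf Q y a) := by
      intro a
      rw [sq_abs, ← hspsq a]
      have h1 : blockPmf Q z a = sp a ^ 2 := (Real.sq_sqrt (hPnn z a)).symm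
      have h2 : blockPmf Q y a = sq a ^ 2 := (Real.sq_sqrt (hPnn y a)).symm
      rw [h1, h2]
      ring
    rw [Finset.sum_congr rfl fun a _ => this a]
    rw [Finset.sum_sub_distrib, Finset.sum_add_distrib, hPsum z, hPsum y,
      ← Finset.mul_sum, ← hρdef]
    ring
  have hsum2 : ∑ a : Fin p → (Fin N → Bool), (sp a + sq a) ^ 2 = 2 + 2 * ρ := by
    have : ∀ a : Fin p → (Fin N → Bool), (sp a + sq a) ^ 2
        = blockPmf Q z a + blockPmf Q y a
          + 2 * Real.sqrt (blockPmf Q z a * blockPmf Q y a) := by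
      intro a
      rw [← hspsq a]
      have h1 : blockPmf Q z a = sp a ^ 2 := (Real.sq_sqrt (hPnn z a)).symm
      have h2 : blockPmf Q y a = sq a ^ 2 := (Real.sq_sqrt (hPnn y a)).symm
      rw [h1, h2]
      ring
    rw [Finset.sum_congr rfl fun a _ => this a]
    rw [Finset.sum_add_distrib, Finset.sum_add_distrib, hPsum z, hPsum y,
      ← Finset.mul_sum, ← hρdef]
    ring
  have hρle : ρ ≤ 1 := by
    have hpt : ∀ a : Fin p → (Fin N → Bool),
        Real.sqrt (blockPmf Q z a * blockPmf Q y a)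
          ≤ (blockPmf Q z a + blockPmf Q y a) / 2 := by
      intro a
      rw [← hspsq a]
      have h1 : blockPmf Q z a = sp a ^ 2 := (Real.sq_sqrt (hPnn z a)).symm
      have h2 : blockPmf Q y a = sq a ^ 2 := (Real.sq_sqrt (hPnn y a)).symm
      rw [h1, h2]
      nlinarith [sq_nonneg (sp a - sq a)]
    have := Finset.sum_le_sum fun a (_ : a ∈ (univ : Finset (Fin p → (Fin N → Bool)))) => hpt a
    rw [← hρdef] at this
    have h2 : ∑ a : Fin p → (Fin N → Bool), (blockPmf Q z a + blockPmf Q y a) / 2 = 1 := by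
      rw [← Finset.sum_div, Finset.sum_add_distrib, hPsum z, hPsum y]
      norm_num
    linarith [le_of_le_of_eq this h2]
  set T : ℝ := ∑ a : Fin p → (Fin N → Bool),
    |blockPmf Q z a - blockPmf Q y a| with hTdef
  have hTnn : 0 ≤ T := Finset.sum_nonneg fun a _ => abs_nonneg _
  have hCS : T ^ 2 ≤ (2 - 2 * ρ) * (2 + 2 * ρ) := by
    have h := Finset.sum_mul_sq_le_sq_mul_sq univ
      (fun a : Fin p → (Fin N → Bool) => |sp a - sq a|) (fun a => sp a + sq a)
    rw [hsum1, hsum2] at h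
    calc T ^ 2 = (∑ a : Fin p → (Fin N → Bool), |sp a - sq a| * (sp a + sq a)) ^ 2 := by
          rw [hTdef, Finset.sum_congr rfl fun a _ => hTterm a]
      _ ≤ (2 - 2 * ρ) * (2 + 2 * ρ) := h
  have h2ρnn : 0 ≤ 2 - 2 * ρ := by
    rw [← hsum1]
    exact Finset.sum_nonneg fun a _ => sq_nonneg _
  set X : ℝ := ∑ ℓ : Fin p, ∑ i : Fin N, (A i ℓ) ^ 2 with hXdef
  have hXnn : 0 ≤ X := Finset.sum_nonneg fun ℓ _ => Finset.sum_nonneg fun i _ => sq_nonneg _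
  have hΔX : ∑ ℓ : Fin p, δ ℓ = Lf ^ 2 / (4 * ε) * X := by
    rw [hXdef, Finset.mul_sum]
    refine Finset.sum_congr rfl fun ℓ _ => ?_
    rw [hδdef]
    simp only
    rw [Finset.sum_congr rfl fun i (_ : i ∈ (univ : Finset (Fin N))) => mul_pow Lf (A i ℓ) 2,
      ← Finset.mul_sum]
    field_simp
  have hT2 : T ^ 2 ≤ 8 * (Lf ^ 2 / (4 * ε) * X) := by
    have h1 : (2 - 2 * ρ) * (2 + 2 * ρ) ≤ (2 - 2 * ρ) * 4 := by
      apply mul_le_mul_of_nonneg_left _ h2ρnn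
      linarith
    have h2 : 2 - 2 * ρ ≤ 2 * (Lf ^ 2 / (4 * ε) * X) := by
      rw [← hΔX]
      linarith [hρge]
    nlinarith
  have hgoal2 : ((1:ℝ)/2 * T) ^ 2 ≤ (3 * Lf ^ 2 / (2 * ε)) * X := by
    have h1 : ((1:ℝ)/2 * T) ^ 2 = T ^ 2 / 4 := by ring
    rw [h1]
    have h2 : 8 * (Lf ^ 2 / (4 * ε) * X) / 4 ≤ (3 * Lf ^ 2 / (2 * ε)) * X := by
      have hnn : 0 ≤ (Lf ^ 2 / ε) * X := by positivity
      have he : (3 * Lf ^ 2 / (2 * ε)) * X - 8 * (Lf ^ 2 / (4 * ε) * X) / 4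
          = (Lf ^ 2 / ε) * X := by
        field_simp
        ring
      linarith
    linarith
  calc (1:ℝ)/2 * T = Real.sqrt (((1:ℝ)/2 * T) ^ 2) :=
        (Real.sqrt_sq (by linarith)).symm
    _ ≤ Real.sqrt ((3 * Lf ^ 2 / (2 * ε)) * X) := Real.sqrt_le_sqrt hgoal2
end

section
/- Fix integers N, p, n ≥ 1 and a constant c_f > 0. For a sequence x = (x^{−p+1}, x^{−p+2}, …, x^{n−1}) with each x^t ∈ {0,1}^N and a tensor Δ ∈ ℝ^{N×N×p}, define E(Δ; x) := (c_f/n) Σ_{t=1}^n Σ_{k=1}^N ( Σ_{j=1}^N Σ_{ℓ=1}^p Δ_{kjℓ} · x_j^{t−ℓ} )². Then for any two such sequences x and y: |E(Δ; x) − E(Δ; y)| ≤ (2c_f/n) · ( Σ_{k=1}^N ( Σ_{j=1}^N Σ_{ℓ=1}^p |Δ_{kjℓ}| )² ) · d_H(x, y), where d_H(x, y) := #{t ∈ {−p+1, …, n−1} : x^t ≠ y^t} is the Hamming distance between the sequences. -/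
open Finset

/-- The quadratic form `E(Δ; x) = (c_f/n) Σ_{t=1}^n Σ_k (Σ_j Σ_ℓ Δ_{kjℓ} x_j^{t−ℓ})²`,
where the lag `ℓ ∈ {1,…,p}` is represented by `ℓ' : Fin p` with `ℓ = ℓ' + 1`. -/
noncomputable def quadE (N p n : ℕ) (c_f : ℝ) (Δ : Fin N → Fin N → Fin p → ℝ)
    (x : ℤ → Fin N → ℝ) : ℝ :=
  (c_f / (n : ℝ)) * ∑ t ∈ Finset.Icc (1 : ℤ) (n : ℤ), ∑ k : Fin N,
    (∑ j : Fin N, ∑ ℓ : Fin p, Δ k j ℓ * x (t - ((ℓ : ℕ) : ℤ) - 1) j) ^ 2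

open Classical in
/-- `x ↦ E(Δ; x)` is Lipschitz with respect to the Hamming distance on
sequences, with constant `(2c_f/n)·‖Δ‖_{2,1,1}²`. -/
theorem stmt11 (N p n : ℕ) (hN : 1 ≤ N) (hp : 1 ≤ p) (hn : 1 ≤ n)
    (c_f : ℝ) (hcf : 0 < c_f)
    (x y : ℤ → Fin N → ℝ)
    (hx : ∀ t ∈ Finset.Icc (1 - (p : ℤ)) ((n : ℤ) - 1), ∀ j, x t j = 0 ∨ x t j = 1)
    (hy : ∀ t ∈ Finset.Icc (1 - (p : ℤ)) ((n : ℤ) - 1), ∀ j, y t j = 0 ∨ y t j = 1)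
    (Δ : Fin N → Fin N → Fin p → ℝ) :
    |quadE N p n c_f Δ x - quadE N p n c_f Δ y| ≤
      (2 * c_f / (n : ℝ)) *
        (∑ k : Fin N, (∑ j : Fin N, ∑ ℓ : Fin p, |Δ k j ℓ|) ^ 2) *
        (((Finset.Icc (1 - (p : ℤ)) ((n : ℤ) - 1)).filter
          (fun t => x t ≠ y t)).card : ℝ) := by
  classical
  set W := Finset.Icc (1 - (p : ℤ)) ((n : ℤ) - 1) with hW
  set D := W.filter (fun t => x t ≠ y t) with hD
  set d : ℝ := (D.card : ℝ) with hd
  have hd0 : (0:ℝ) ≤ d := Nat.cast_nonneg _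
  set M : Fin N → ℝ := fun k => ∑ j, ∑ ℓ, |Δ k j ℓ| with hMdef
  have hM0 : ∀ k, 0 ≤ M k := fun k =>
    Finset.sum_nonneg fun j _ => Finset.sum_nonneg fun ℓ _ => abs_nonneg _
  have hwin : ∀ t ∈ Finset.Icc (1:ℤ) (n:ℤ), ∀ ℓ : Fin p,
      t - ((ℓ:ℕ):ℤ) - 1 ∈ W := by
    intro t ht ℓ
    have hl : ((ℓ:ℕ):ℤ) < (p:ℤ) := by exact_mod_cast ℓ.isLt
    have hl0 : (0:ℤ) ≤ ((ℓ:ℕ):ℤ) := Int.ofNat_nonneg _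
    simp only [hW, Finset.mem_Icc] at ht ⊢
    omega
  have hx1 : ∀ s ∈ W, ∀ j, |x s j| ≤ 1 := by
    intro s hs j; rcases hx s hs j with h | h <;> simp [h]
  have hy1 : ∀ s ∈ W, ∀ j, |y s j| ≤ 1 := by
    intro s hs j; rcases hy s hs j with h | h <;> simp [h]
  have hxy : ∀ s ∈ W, ∀ j, |x s j - y s j| ≤ (if s ∈ D then (1:ℝ) else 0) := by
    intro s hs j
    by_cases h : x s = y s
    · simp only [h, sub_self, abs_zero]
      split <;> norm_num
    · have hsD : s ∈ D := Finset.mem_filter.mpr ⟨hs, h⟩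
      simp only [hsD, if_true]
      rcases hx s hs j with h1 | h1 <;> rcases hy s hs j with h2 | h2 <;>
        simp [h1, h2]
  set a : ℤ → Fin N → ℝ :=
    fun t k => ∑ j, ∑ ℓ, Δ k j ℓ * x (t - ((ℓ:ℕ):ℤ) - 1) j with ha
  set b : ℤ → Fin N → ℝ :=
    fun t k => ∑ j, ∑ ℓ, Δ k j ℓ * y (t - ((ℓ:ℕ):ℤ) - 1) j with hb
  set B : ℤ → Fin N → ℝ :=
    fun t k => ∑ j, ∑ ℓ, |Δ k j ℓ| *
      (if t - ((ℓ:ℕ):ℤ) - 1 ∈ D then (1:ℝ) else 0) with hB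
  have habs : ∀ t ∈ Finset.Icc (1:ℤ) (n:ℤ), ∀ k, |a t k| ≤ M k := by
    intro t ht k
    calc |a t k| ≤ ∑ j, |∑ ℓ, Δ k j ℓ * x (t - ((ℓ:ℕ):ℤ) - 1) j| :=
          Finset.abs_sum_le_sum_abs _ _
      _ ≤ ∑ j, ∑ ℓ, |Δ k j ℓ * x (t - ((ℓ:ℕ):ℤ) - 1) j| :=
          Finset.sum_le_sum (fun j _ => Finset.abs_sum_le_sum_abs _ _)
      _ ≤ M k := by
          refine Finset.sum_le_sum fun j _ => Finset.sum_le_sum fun ℓ _ => ?_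
          rw [abs_mul]
          calc |Δ k j ℓ| * |x (t - ((ℓ:ℕ):ℤ) - 1) j| ≤ |Δ k j ℓ| * 1 :=
                mul_le_mul_of_nonneg_left (hx1 _ (hwin t ht ℓ) j) (abs_nonneg _)
            _ = |Δ k j ℓ| := mul_one _
  have hbabs : ∀ t ∈ Finset.Icc (1:ℤ) (n:ℤ), ∀ k, |b t k| ≤ M k := by
    intro t ht k
    calc |b t k| ≤ ∑ j, |∑ ℓ, Δ k j ℓ * y (t - ((ℓ:ℕ):ℤ) - 1) j| :=
          Finset.abs_sum_le_sum_abs _ _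
      _ ≤ ∑ j, ∑ ℓ, |Δ k j ℓ * y (t - ((ℓ:ℕ):ℤ) - 1) j| :=
          Finset.sum_le_sum (fun j _ => Finset.abs_sum_le_sum_abs _ _)
      _ ≤ M k := by
          refine Finset.sum_le_sum fun j _ => Finset.sum_le_sum fun ℓ _ => ?_
          rw [abs_mul]
          calc |Δ k j ℓ| * |y (t - ((ℓ:ℕ):ℤ) - 1) j| ≤ |Δ k j ℓ| * 1 :=
                mul_le_mul_of_nonneg_left (hy1 _ (hwin t ht ℓ) j) (abs_nonneg _)
            _ = |Δ k j ℓ| := mul_one _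
  have hsub : ∀ t ∈ Finset.Icc (1:ℤ) (n:ℤ), ∀ k, |a t k - b t k| ≤ B t k := by
    intro t ht k
    have heq : a t k - b t k =
        ∑ j, ∑ ℓ, Δ k j ℓ * (x (t - ((ℓ:ℕ):ℤ) - 1) j - y (t - ((ℓ:ℕ):ℤ) - 1) j) := by
      simp only [ha, hb, mul_sub, Finset.sum_sub_distrib]
    rw [heq]
    calc |∑ j, ∑ ℓ, Δ k j ℓ * (x (t - ((ℓ:ℕ):ℤ) - 1) j - y (t - ((ℓ:ℕ):ℤ) - 1) j)|
        ≤ ∑ j, |∑ ℓ, Δ k j ℓ * (x (t - ((ℓ:ℕ):ℤ) - 1) j - y (t - ((ℓ:ℕ):ℤ) - 1) j)| :=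
          Finset.abs_sum_le_sum_abs _ _
      _ ≤ ∑ j, ∑ ℓ, |Δ k j ℓ * (x (t - ((ℓ:ℕ):ℤ) - 1) j - y (t - ((ℓ:ℕ):ℤ) - 1) j)| :=
          Finset.sum_le_sum (fun j _ => Finset.abs_sum_le_sum_abs _ _)
      _ ≤ B t k := by
          refine Finset.sum_le_sum fun j _ => Finset.sum_le_sum fun ℓ _ => ?_
          rw [abs_mul]
          exact mul_le_mul_of_nonneg_left (hxy _ (hwin t ht ℓ) j) (abs_nonneg _)
  have hB0 : ∀ t k, 0 ≤ B t k := by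
    intro t k
    refine Finset.sum_nonneg fun j _ => Finset.sum_nonneg fun ℓ _ => ?_
    have : (0:ℝ) ≤ (if t - ((ℓ:ℕ):ℤ) - 1 ∈ D then (1:ℝ) else 0) := by
      split <;> norm_num
    positivity
  have hsq : ∀ t ∈ Finset.Icc (1:ℤ) (n:ℤ), ∀ k,
      |a t k ^ 2 - b t k ^ 2| ≤ 2 * M k * B t k := by
    intro t ht k
    have h1 : a t k ^ 2 - b t k ^ 2 = (a t k + b t k) * (a t k - b t k) := by ring
    rw [h1, abs_mul]
    have h2 : |a t k + b t k| ≤ 2 * M k := by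
      have := habs t ht k; have := hbabs t ht k
      calc |a t k + b t k| ≤ |a t k| + |b t k| := abs_add_le _ _
        _ ≤ 2 * M k := by linarith
    exact mul_le_mul h2 (hsub t ht k) (abs_nonneg _) (by positivity) |>.trans le_rfl
  have hcount : ∀ ℓ : Fin p,
      ∑ t ∈ Finset.Icc (1:ℤ) (n:ℤ),
        (if t - ((ℓ:ℕ):ℤ) - 1 ∈ D then (1:ℝ) else 0) ≤ d := by
    intro ℓ
    rw [Finset.sum_boole]
    have hcard : ((Finset.Icc (1:ℤ) (n:ℤ)).filter
        (fun t => t - ((ℓ:ℕ):ℤ) - 1 ∈ D)).card ≤ D.card := by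
      apply Finset.card_le_card_of_injOn (fun t => t - ((ℓ:ℕ):ℤ) - 1)
      · intro t ht; exact (Finset.mem_filter.mp ht).2
      · intro s _ t _ h; simpa using h
    rw [hd]; exact_mod_cast hcard
  have hBsum : ∀ k, ∑ t ∈ Finset.Icc (1:ℤ) (n:ℤ), B t k ≤ M k * d := by
    intro k
    calc ∑ t ∈ Finset.Icc (1:ℤ) (n:ℤ), B t k
        = ∑ j, ∑ ℓ, |Δ k j ℓ| *
            ∑ t ∈ Finset.Icc (1:ℤ) (n:ℤ),
              (if t - ((ℓ:ℕ):ℤ) - 1 ∈ D then (1:ℝ) else 0) := by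
          rw [Finset.sum_comm]
          refine Finset.sum_congr rfl fun j _ => ?_
          rw [Finset.sum_comm]
          exact Finset.sum_congr rfl fun ℓ _ => (Finset.mul_sum _ _ _).symm
      _ ≤ ∑ j, ∑ ℓ, |Δ k j ℓ| * d :=
          Finset.sum_le_sum fun j _ => Finset.sum_le_sum fun ℓ _ =>
            mul_le_mul_of_nonneg_left (hcount ℓ) (abs_nonneg _)
      _ = M k * d := by rw [hMdef]; rw [Finset.sum_mul]
                        exact Finset.sum_congr rfl fun j _ => (Finset.sum_mul _ _ _).symm
  have hEx : quadE N p n c_f Δ x =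
      (c_f / (n:ℝ)) * ∑ t ∈ Finset.Icc (1:ℤ) (n:ℤ), ∑ k, a t k ^ 2 := rfl
  have hEy : quadE N p n c_f Δ y =
      (c_f / (n:ℝ)) * ∑ t ∈ Finset.Icc (1:ℤ) (n:ℤ), ∑ k, b t k ^ 2 := rfl
  have hcn : (0:ℝ) ≤ c_f / (n:ℝ) := by positivity
  have hmain : |∑ t ∈ Finset.Icc (1:ℤ) (n:ℤ), ∑ k, (a t k ^ 2 - b t k ^ 2)|
      ≤ 2 * (∑ k, M k ^ 2) * d := by
    calc |∑ t ∈ Finset.Icc (1:ℤ) (n:ℤ), ∑ k, (a t k ^ 2 - b t k ^ 2)|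
        ≤ ∑ t ∈ Finset.Icc (1:ℤ) (n:ℤ), |∑ k, (a t k ^ 2 - b t k ^ 2)| :=
          Finset.abs_sum_le_sum_abs _ _
      _ ≤ ∑ t ∈ Finset.Icc (1:ℤ) (n:ℤ), ∑ k, |a t k ^ 2 - b t k ^ 2| :=
          Finset.sum_le_sum fun t _ => Finset.abs_sum_le_sum_abs _ _
      _ ≤ ∑ t ∈ Finset.Icc (1:ℤ) (n:ℤ), ∑ k, 2 * M k * B t k :=
          Finset.sum_le_sum fun t ht => Finset.sum_le_sum fun k _ => hsq t ht k
      _ = ∑ k, 2 * M k * ∑ t ∈ Finset.Icc (1:ℤ) (n:ℤ), B t k := by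
          rw [Finset.sum_comm]
          exact Finset.sum_congr rfl fun k _ => (Finset.mul_sum _ _ _).symm
      _ ≤ ∑ k, 2 * M k * (M k * d) :=
          Finset.sum_le_sum fun k _ =>
            mul_le_mul_of_nonneg_left (hBsum k) (by have := hM0 k; positivity)
      _ = 2 * (∑ k, M k ^ 2) * d := by
          rw [Finset.mul_sum, Finset.sum_mul]
          exact Finset.sum_congr rfl fun k _ => by ring
  have key : |quadE N p n c_f Δ x - quadE N p n c_f Δ y|
      ≤ (c_f / (n:ℝ)) * (2 * (∑ k, M k ^ 2) * d) := by
    rw [hEx, hEy, ← mul_sub, ← Finset.sum_sub_distrib]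
    simp only [← Finset.sum_sub_distrib]
    rw [abs_mul, abs_of_nonneg hcn]
    exact mul_le_mul_of_nonneg_left hmain hcn
  calc |quadE N p n c_f Δ x - quadE N p n c_f Δ y|
      ≤ (c_f / (n:ℝ)) * (2 * (∑ k, M k ^ 2) * d) := key
    _ = (2 * c_f / (n:ℝ)) * (∑ k, (∑ j, ∑ ℓ, |Δ k j ℓ|) ^ 2) * d := by
        rw [hMdef]; ring
    _ = _ := rfl
end

section
/- Let N ≥ 1 and p ≥ 1 be integers and c > 0. Let X : [−π, π] → ℂ^{N×N} be a continuous matrix-valued function such that for every ω ∈ [−π, π], X(ω) is Hermitian and v* X(ω) v ≥ c² ‖v‖² for all v ∈ ℂ^N. For ℓ ∈ ℤ define C_ℓ := (1/(2π)) ∫_{−π}^{π} X(ω) e^{iωℓ} dω ∈ ℂ^{N×N}. Then for any vectors u_0, u_1, …, u_{p−1} ∈ ℂ^N: Re( Σ_{r=0}^{p−1} Σ_{s=0}^{p−1} u_r* C_{r−s} u_s ) ≥ c² Σ_{r=0}^{p−1} ‖u_r‖². In other words, the Np×Np block-Toeplitz matrix with (r,s) block C_{r−s} has smallest eigenvalue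 at least c². -/
/-!
Put `w(ω) = ∑ₛ e^{-iωs} uₛ`. Since `e^{iω(r-s)} = conj(e^{-iωr}) e^{-iωs}`, the block-Toeplitz
form `∑_{r,s} u_r* C_{r-s} u_s` equals `(1/2π) ∫ w(ω)* X(ω) w(ω) dω`, and the integrand is at
least `c² ‖w(ω)‖²`. The same identity for `X ≡ 1`, whose autocovariances are `C_ℓ = δ_{ℓ0} 1` by
orthogonality of the characters `e^{iωk}` on `[-π, π]`, is Parseval's identity
`(1/2π) ∫ ‖w(ω)‖² dω = ∑_r ‖u_r‖²`.
-/

open Finset Real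

/-- The lag-`ℓ` autocovariance matrix `C_ℓ = (1/2π) ∫_{−π}^{π} X(ω) e^{iωℓ} dω`,
defined entrywise. -/
noncomputable def autocov (N : ℕ) (X : ℝ → Matrix (Fin N) (Fin N) ℂ) (ℓ : ℤ) :
    Matrix (Fin N) (Fin N) ℂ :=
  fun i j =>
    (1 / (2 * (π : ℂ))) *
      ∫ ω in (-π)..π, X ω i j * Complex.exp (Complex.I * (ω : ℂ) * (ℓ : ℂ))

open Matrix MeasureTheory
open Complex (I)

section Sesquilinear

variable {R n ι : Type*} [CommSemiring R] [StarRing R] [Fintype n]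

theorem star_dotProduct_mulVec_eq_sum (A : Matrix n n R) (a b : n → R) :
    star a ⬝ᵥ A *ᵥ b = ∑ i, ∑ j, starRingEnd R (a i) * A i j * b j := by
  simp [dotProduct, mulVec, Finset.mul_sum, mul_assoc, starRingEnd_apply]

theorem star_dotProduct_mulVec_sum_smul [Fintype ι] (A : Matrix n n R) (c : ι → R)
    (u : ι → n → R) :
    star (∑ s, c s • u s) ⬝ᵥ A *ᵥ (∑ s, c s • u s) =
      ∑ r, ∑ s, star (c r) * c s * (star (u r) ⬝ᵥ A *ᵥ u s) := by
  simp only [star_sum, star_smul, mulVec_sum, mulVec_smul, dotProduct_sum, dotProduct_smul,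
    sum_dotProduct, smul_dotProduct, smul_eq_mul, mul_sum, mul_assoc, mul_left_comm]
  exact Finset.sum_comm

end Sesquilinear

theorem star_dotProduct_self_eq_ofReal_sum {n : Type*} [Fintype n] (v : n → ℂ) :
    star v ⬝ᵥ v = ((∑ i, ‖v i‖ ^ 2 : ℝ) : ℂ) := by
  simp [dotProduct, Complex.conj_mul']

theorem continuousOn_star_dotProduct_mulVec {α R n : Type*} [TopologicalSpace α] [Fintype n]
    [NonUnitalNonAssocSemiring R] [StarRing R] [TopologicalSpace R] [IsTopologicalSemiring R]
    [ContinuousStar R] {s : Set α} {A : α → Matrix n n R} {a b : α → n → R}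
    (hA : ContinuousOn A s) (ha : Continuous a) (hb : Continuous b) :
    ContinuousOn (fun x => star (a x) ⬝ᵥ A x *ᵥ b x) s := by
  rw [continuousOn_iff_continuous_domRestrict] at hA ⊢
  exact (ha.comp continuous_subtype_val).star.dotProduct
    (hA.matrix_mulVec (hb.comp continuous_subtype_val))

theorem integral_exp_I_mul_int (k : ℤ) :
    ∫ ω in (-π)..π, Complex.exp (I * ω * k) = if k = 0 then 2 * (π : ℂ) else 0 := by
  split_ifs with hk
  · simp only [hk, Int.cast_zero, mul_zero, Complex.exp_zero, intervalIntegral.integral_const,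
      sub_neg_eq_add, Complex.real_smul, Complex.ofReal_add, mul_one]
    ring
  have hIk : I * k ≠ 0 := by simp [hk]
  have hperiod : Complex.exp (I * k * π) = Complex.exp (I * k * (-π : ℝ)) := by
    rw [show I * k * π = I * k * (-π : ℝ) + k * (2 * π * I) by push_cast; ring,
      Complex.exp_add, Complex.exp_int_mul_two_pi_mul_I, mul_one]
  simp_rw [show ∀ ω : ℝ, I * ω * k = I * k * ω from fun ω => by ring]
  rw [integral_exp_mul_complex hIk, hperiod, sub_self, zero_div]

theorem exp_I_mul_sub (ω : ℝ) (r s : ℤ) :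
    Complex.exp (I * ω * ((r - s : ℤ) : ℂ)) =
      star (Complex.exp (-(I * ω * r))) * Complex.exp (-(I * ω * s)) := by
  rw [Complex.star_def, ← Complex.exp_conj, ← Complex.exp_add]
  congr 1
  simp only [Int.cast_sub, map_neg, map_mul, Complex.conj_I, Complex.conj_ofReal, neg_mul,
    map_intCast, neg_neg]
  ring

theorem intervalIntegral.integral_sum_sum {ι κ E : Type*} [Fintype ι] [Fintype κ]
    [NormedAddCommGroup E] [NormedSpace ℝ E] {a b : ℝ} {f : ι → κ → ℝ → E}
    (hf : ∀ i j, IntervalIntegrable (f i j) volume a b) :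
    ∫ x in a..b, ∑ i, ∑ j, f i j x = ∑ i, ∑ j, ∫ x in a..b, f i j x := by
  rw [intervalIntegral.integral_finsetSum fun i _ => by
    simpa only [Finset.sum_fn] using IntervalIntegrable.sum univ fun j _ => hf i j]
  exact sum_congr rfl fun i _ => intervalIntegral.integral_finsetSum fun j _ => hf i j

section Autocov

variable {N : ℕ} {X : ℝ → Matrix (Fin N) (Fin N) ℂ}

theorem star_dotProduct_autocov_mulVec
    (hX : ∀ i j, IntervalIntegrable (fun ω => X ω i j) volume (-π) π)
    (ℓ : ℤ) (a b : Fin N → ℂ) :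
    star a ⬝ᵥ autocov N X ℓ *ᵥ b =
      1 / (2 * π) * ∫ ω in (-π)..π, (star a ⬝ᵥ X ω *ᵥ b) * Complex.exp (I * ω * ℓ) := by
  have hint : ∀ i j, IntervalIntegrable
      (fun ω => starRingEnd ℂ (a i) * (X ω i j * Complex.exp (I * ω * ℓ)) * b j)
      volume (-π) π := fun i j =>
    (((hX i j).mul_continuousOn (by fun_prop)).const_mul _).mul_const _
  calc star a ⬝ᵥ autocov N X ℓ *ᵥ b
      = 1 / (2 * π) * ∑ i, ∑ j, ∫ ω in (-π)..π,
          starRingEnd ℂ (a i) * (X ω i j * Complex.exp (I * ω * ℓ)) * b j := by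
        simp only [star_dotProduct_mulVec_eq_sum, autocov, Finset.mul_sum]
        refine sum_congr rfl fun i _ => sum_congr rfl fun j _ => ?_
        rw [intervalIntegral.integral_mul_const, intervalIntegral.integral_const_mul]
        ring
    _ = 1 / (2 * π) * ∫ ω in (-π)..π, (star a ⬝ᵥ X ω *ᵥ b) * Complex.exp (I * ω * ℓ) := by
        rw [← intervalIntegral.integral_sum_sum hint]
        congr 1
        refine intervalIntegral.integral_congr fun ω _ => ?_
        simp only [star_dotProduct_mulVec_eq_sum, Finset.sum_mul]
        refine sum_congr rfl fun i _ => sum_congr rfl fun j _ => ?_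
        ring

theorem autocov_one (ℓ : ℤ) :
    autocov N (fun _ => 1) ℓ = if ℓ = 0 then 1 else 0 := by
  have hpi : (π : ℂ) ≠ 0 := Complex.ofReal_ne_zero.2 pi_ne_zero
  ext i j
  rcases eq_or_ne i j with rfl | hij
  · split_ifs with hℓ
    · simp only [autocov, one_apply_eq, hℓ, Int.cast_zero, mul_zero, Complex.exp_zero, mul_one,
        intervalIntegral.integral_const, sub_neg_eq_add, Complex.real_smul, Complex.ofReal_add]
      field_simp
      ring
    · simp [autocov, integral_exp_I_mul_int, hℓ]
  · split_ifs <;> simp [autocov, hij]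

end Autocov

noncomputable def trigSum {p N : ℕ} (u : Fin p → Fin N → ℂ) (ω : ℝ) : Fin N → ℂ :=
  ∑ s : Fin p, Complex.exp (-(I * ω * ((s : ℤ) : ℂ))) • u s

@[fun_prop]
theorem continuous_trigSum {p N : ℕ} (u : Fin p → Fin N → ℂ) : Continuous (trigSum u) := by
  unfold trigSum
  fun_prop

theorem sum_star_dotProduct_autocov_mulVec {p N : ℕ} {X : ℝ → Matrix (Fin N) (Fin N) ℂ}
    (hX : ContinuousOn X (Set.Icc (-π) π)) (u : Fin p → Fin N → ℂ) :
    ∑ r : Fin p, ∑ s : Fin p, star (u r) ⬝ᵥ autocov N X ((r : ℤ) - (s : ℤ)) *ᵥ u s =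
      1 / (2 * π) * ∫ ω in (-π)..π, star (trigSum u ω) ⬝ᵥ X ω *ᵥ trigSum u ω := by
  have hpi : -π ≤ π := by linarith [pi_pos]
  have hXij : ∀ i j, IntervalIntegrable (fun ω => X ω i j) volume (-π) π :=
    fun i j => (continuousOn_pi.1 (continuousOn_pi.1 hX i) j).intervalIntegrable_of_Icc hpi
  have hint : ∀ r s : Fin p, IntervalIntegrable
      (fun ω => (star (u r) ⬝ᵥ X ω *ᵥ u s) * Complex.exp (I * ω * (((r : ℤ) - (s : ℤ) : ℤ) : ℂ)))
      volume (-π) π := fun r s =>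
    ((continuousOn_star_dotProduct_mulVec hX continuous_const continuous_const).mul
      (by fun_prop : Continuous _).continuousOn).intervalIntegrable_of_Icc hpi
  simp only [star_dotProduct_autocov_mulVec hXij, ← Finset.mul_sum]
  rw [← intervalIntegral.integral_sum_sum hint]
  congr 1
  refine intervalIntegral.integral_congr fun ω _ => ?_
  rw [trigSum, star_dotProduct_mulVec_sum_smul]
  refine sum_congr rfl fun r _ => sum_congr rfl fun s _ => ?_
  rw [exp_I_mul_sub]
  ring

theorem integral_norm_trigSum_sq {p N : ℕ} (u : Fin p → Fin N → ℂ) :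
    ∫ ω in (-π)..π, ∑ i, ‖trigSum u ω i‖ ^ 2 = 2 * π * ∑ r, ∑ i, ‖u r i‖ ^ 2 := by
  have hdiag : ∀ r s : Fin p, star (u r) ⬝ᵥ (if r = s then 1 else 0 : Matrix _ _ ℂ) *ᵥ u s =
      if r = s then ((∑ i, ‖u r i‖ ^ 2 : ℝ) : ℂ) else 0 := by
    intro r s
    rcases eq_or_ne r s with rfl | hrs
    · simp [star_dotProduct_self_eq_ofReal_sum]
    · simp [hrs]
  have h := sum_star_dotProduct_autocov_mulVec (X := fun _ => 1) continuousOn_const u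
  simp only [autocov_one, sub_eq_zero, Nat.cast_inj, Fin.val_inj, hdiag, Finset.sum_ite_eq,
    Finset.mem_univ, if_true, one_mulVec, star_dotProduct_self_eq_ofReal_sum,
    intervalIntegral.integral_ofReal] at h
  have h' : ∑ r, ∑ i, ‖u r i‖ ^ 2 = 1 / (2 * π) * ∫ ω in (-π)..π, ∑ i, ‖trigSum u ω i‖ ^ 2 := by
    exact_mod_cast h
  rw [h']
  field_simp

theorem stmt13_general (N p : ℕ) (c : ℝ)
    (X : ℝ → Matrix (Fin N) (Fin N) ℂ)
    (hcont : ∀ i j, ContinuousOn (fun ω => X ω i j) (Set.Icc (-π) π))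
    (hpos : ∀ ω ∈ Set.Icc (-π) π, ∀ v : Fin N → ℂ,
      c ^ 2 * (∑ i, ‖v i‖ ^ 2) ≤
        (∑ i, ∑ j, (starRingEnd ℂ) (v i) * X ω i j * v j).re)
    (u : Fin p → Fin N → ℂ) :
    c ^ 2 * (∑ r : Fin p, ∑ i, ‖u r i‖ ^ 2) ≤
      (∑ r : Fin p, ∑ s : Fin p, ∑ i, ∑ j,
        (starRingEnd ℂ) (u r i) * autocov N X ((r : ℤ) - (s : ℤ)) i j * u s j).re := by
  have hpi : -π ≤ π := by linarith [pi_pos]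
  have hX : ContinuousOn X (Set.Icc (-π) π) :=
    continuousOn_pi.2 fun i => continuousOn_pi.2 (hcont i)
  have hF := continuousOn_star_dotProduct_mulVec hX (continuous_trigSum u) (continuous_trigSum u)
  simp only [← star_dotProduct_mulVec_eq_sum] at hpos ⊢
  calc c ^ 2 * ∑ r, ∑ i, ‖u r i‖ ^ 2
      = 1 / (2 * π) * ∫ ω in (-π)..π, c ^ 2 * ∑ i, ‖trigSum u ω i‖ ^ 2 := by
        rw [intervalIntegral.integral_const_mul, integral_norm_trigSum_sq]
        field_simp
    _ ≤ 1 / (2 * π) * ∫ ω in (-π)..π, (star (trigSum u ω) ⬝ᵥ X ω *ᵥ trigSum u ω).re := by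
        gcongr
        refine intervalIntegral.integral_mono_on hpi ?_ ?_ fun ω hω => hpos ω hω _
        · exact (by fun_prop : Continuous _).intervalIntegrable _ _
        · exact (Complex.continuous_re.comp_continuousOn hF).intervalIntegrable_of_Icc hpi
    _ = (((1 / (2 * π) : ℝ) : ℂ) *
          ∫ ω in (-π)..π, star (trigSum u ω) ⬝ᵥ X ω *ᵥ trigSum u ω).re := by
        have hre := Complex.reCLM.intervalIntegral_comp_comm
          (hF.intervalIntegrable_of_Icc (μ := volume) hpi)
        simp only [Complex.reCLM_apply] at hre
        rw [Complex.re_ofReal_mul, hre]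
    _ = _ := by
        rw [sum_star_dotProduct_autocov_mulVec hX u]
        push_cast
        rfl

/-- if the (Hermitian, continuous) spectral density `X(ω)` satisfies
`v*X(ω)v ≥ c²‖v‖²` on `[−π,π]`, then the block-Toeplitz matrix built from the
autocovariances `C_{r−s}` satisfies
`Re(Σ_{r,s} u_r* C_{r−s} u_s) ≥ c² Σ_r ‖u_r‖²`. -/
theorem stmt13 (N p : ℕ) (hN : 1 ≤ N) (hp : 1 ≤ p) (c : ℝ) (hc : 0 < c)
    (X : ℝ → Matrix (Fin N) (Fin N) ℂ)
    (hcont : ∀ i j, ContinuousOn (fun ω => X ω i j) (Set.Icc (-π) π))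
    (hherm : ∀ ω ∈ Set.Icc (-π) π, (X ω).IsHermitian)
    (hpos : ∀ ω ∈ Set.Icc (-π) π, ∀ v : Fin N → ℂ,
      c ^ 2 * (∑ i, ‖v i‖ ^ 2) ≤
        (∑ i, ∑ j, (starRingEnd ℂ) (v i) * X ω i j * v j).re)
    (u : Fin p → Fin N → ℂ) :
    c ^ 2 * (∑ r : Fin p, ∑ i, ‖u r i‖ ^ 2) ≤
      (∑ r : Fin p, ∑ s : Fin p, ∑ i, ∑ j,
        (starRingEnd ℂ) (u r i) * autocov N X ((r : ℤ) - (s : ℤ)) i j * u s j).re :=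
  stmt13_general N p c X hcont hpos u
end

section
/- Let N, p, n be positive integers with N²p ≥ 2, ε ∈ (0,1/2), L_f > 0, and let f : ℝ → [ε, 1−ε] be differentiable with |f'(u)| ≤ L_f for all u. Let (Ω, F, P) be a probability space with a filtration (F_t)_{t=0}^{n}, and let x^t : Ω → {0,1}^N for t = −p+1, …, n be random vectors such that x^t is F_0-measurable for t ≤ 0, x^t is F_t-measurable for 1 ≤ t ≤ n, and for every t ∈ {1,…,n} and i ∈ {1,…,N}, E[x_i^t | F_{t−1}] = z_i^t almost surely, where z_i^t := f( Σ_{j=1}^N Σ_{ℓ=1}^p Θ*_{ijℓ} x_j^{t−ℓ} ) for a fixed tensor Θ* ∈ ℝ^{N×N×p}. Define G_{ijℓ} := (1/n) Σ_{t=1}^n ( (1−x_i^t)/(1−z_i^t) − x_i^t/z_i^t ) · f'( Σ_{j',ℓ'} Θ*_{ij'ℓ'} x_{j'}^{t−ℓ'} ) · x_j^{t−ℓ} (the (i,j,ℓ) entry of the gradient of the negative log-likelihood at Θ*). Then for every constant c₁ > 2, with probability at least 1 − 2(N²p)^{−(c₁/2−1)}: max_{i,j∈[N], ℓ∈[p]}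 |G_{ijℓ}| ≤ (L_f/ε) · √(c₁ · log(N²p)/n). -/
open Finset MeasureTheory ProbabilityTheory Real
open scoped ENNReal NNReal

/-!
Each summand of `n • G_{ijℓ}` equals `(z_i^t - x_i^t) • W_t` with `W_t` determined by the past,
so it is a martingale difference, bounded by `L_f / ε` since `z_i^t ∈ [ε, 1 - ε]`. Bounding
`exp` by its chord on `[-λc, λc]` gives `E[exp (λ d_t) | past] ≤ cosh (λc) ≤ exp (λ²c²/2)`, so
`n • G_{ijℓ}` is sub-Gaussian with variance proxy `n (L_f/ε)²` (Azuma–Hoeffding). At the stated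
threshold each entry exceeds it with probability at most `2 (N²p)^{-c₁/2}`, and a union bound
over the `N²p` entries concludes.
-/

/-- `exp` lies below its chord on `[-l c, l c]`. -/
theorem Real.exp_mul_le_cosh_add_div_mul_sinh {c d : ℝ} (hc : 0 < c) (hd : |d| ≤ c) (l : ℝ) :
    exp (l * d) ≤ cosh (l * c) + d / c * sinh (l * c) := by
  obtain ⟨hdl, hdu⟩ := abs_le.1 hd
  set θ : ℝ := (c + d) / (2 * c) with hθ
  have hθ0 : 0 ≤ θ := div_nonneg (by linarith) (by positivity)
  have hθ1 : 0 ≤ 1 - θ := by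
    rw [hθ, sub_nonneg, div_le_one (by positivity)]; linarith
  calc exp (l * d) = exp (θ * (l * c) + (1 - θ) * -(l * c)) := by
        congr 1; rw [hθ]; field_simp; ring
    _ ≤ θ * exp (l * c) + (1 - θ) * exp (-(l * c)) :=
        convexOn_exp.2 (Set.mem_univ _) (Set.mem_univ _) hθ0 hθ1 (by ring)
    _ = cosh (l * c) + d / c * sinh (l * c) := by
        rw [cosh_eq, sinh_eq, hθ]; field_simp; ring

namespace ProbabilityTheory

variable {Ω : Type*} {m m0 : MeasurableSpace Ω} {P : Measure Ω}

theorem integrable_exp_mul_of_bounded [IsFiniteMeasure P] {X : Ω → ℝ} (hX : Measurable X)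
    {C : ℝ} (hC : ∀ ω, |X ω| ≤ C) (l : ℝ) : Integrable (fun ω ↦ exp (l * X ω)) P := by
  refine .of_bound (by fun_prop) (exp (|l| * C)) (ae_of_all _ fun ω ↦ ?_)
  rw [norm_of_nonneg (exp_nonneg _), exp_le_exp]
  calc l * X ω ≤ |l * X ω| := le_abs_self _
    _ = |l| * |X ω| := abs_mul _ _
    _ ≤ |l| * C := mul_le_mul_of_nonneg_left (hC ω) (abs_nonneg l)

theorem integral_mul_eq_zero_of_condExp_eq_zero (hm : m ≤ m0) [SigmaFinite (P.trim hm)]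
    {g d : Ω → ℝ} (hg : StronglyMeasurable[m] g) (hgd : Integrable (g * d) P)
    (hd : Integrable d P) (hcond : P[d|m] =ᵐ[P] 0) : ∫ ω, g ω * d ω ∂P = 0 := by
  calc ∫ ω, g ω * d ω ∂P = ∫ ω, P[g * d|m] ω ∂P := (integral_condExp hm).symm
    _ = ∫ ω, (g * P[d|m]) ω ∂P :=
        integral_congr_ae (condExp_mul_of_stronglyMeasurable_left hg hgd hd)
    _ = 0 := by
        rw [integral_congr_ae (hcond.mono fun ω h ↦ by simp [h] : g * P[d|m] =ᵐ[P] 0)]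
        simp

theorem condExp_sub_mul_eq_zero (hm : m ≤ m0) [SigmaFinite (P.trim hm)]
    {X Z W : Ω → ℝ} (hZ : StronglyMeasurable[m] Z) (hW : StronglyMeasurable[m] W)
    (hZi : Integrable Z P) (hXi : Integrable X P) (hi : Integrable ((Z - X) * W) P)
    (hcond : P[X|m] =ᵐ[P] Z) : P[(Z - X) * W|m] =ᵐ[P] 0 := by
  rw [mul_comm]
  filter_upwards [condExp_mul_of_stronglyMeasurable_left hW (by rwa [mul_comm]) (hZi.sub hXi),
    condExp_sub hZi hXi m, hcond] with ω h1 h2 h3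
  simp [h1, h2, h3, condExp_of_stronglyMeasurable hm hZ hZi]

theorem abs_sum_range_le_of_abs_le {d : ℕ → Ω → ℝ} {c : ℝ} {n : ℕ}
    (hbdd : ∀ t < n, ∀ ω, |d t ω| ≤ c) (ω : Ω) : |∑ t ∈ range n, d t ω| ≤ n * c := by
  refine (abs_sum_le_sum_abs _ _).trans ?_
  simpa using sum_le_card_nsmul _ _ _ fun t ht ↦ hbdd t (mem_range.1 ht) ω

section BoundedDifferences

variable [IsProbabilityMeasure P] (ℱ : Filtration ℕ m0) {d : ℕ → Ω → ℝ} {c : ℝ} {n : ℕ}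

theorem measurable_sum_range_of_succ (hmeas : ∀ t < n, Measurable[ℱ (t + 1)] (d t)) :
    Measurable[ℱ n] (fun ω ↦ ∑ t ∈ range n, d t ω) :=
  Finset.measurable_sum _ fun t ht ↦
    (hmeas t (mem_range.1 ht)).mono (ℱ.mono (mem_range.1 ht)) le_rfl

theorem integral_exp_mul_sum_range_le_cosh_pow (hc : 0 < c)
    (hmeas : ∀ t < n, Measurable[ℱ (t + 1)] (d t)) (hbdd : ∀ t < n, ∀ ω, |d t ω| ≤ c)
    (hcond : ∀ t < n, P[d t|ℱ t] =ᵐ[P] 0) (l : ℝ) :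
    ∫ ω, exp (l * ∑ t ∈ range n, d t ω) ∂P ≤ cosh (l * c) ^ n := by
  induction n with
  | zero => simp
  | succ n ih =>
    set S : Ω → ℝ := fun ω ↦ ∑ t ∈ range n, d t ω
    set E : Ω → ℝ := fun ω ↦ exp (l * S ω)
    have hSm : Measurable[ℱ n] S :=
      measurable_sum_range_of_succ ℱ fun t ht ↦ hmeas t (by omega)
    have hEm : Measurable[ℱ n] E := by fun_prop
    have hdm : Measurable (d n) := (hmeas n n.lt_succ_self).mono (ℱ.le _) le_rfl
    have hE : Integrable E P := integrable_exp_mul_of_bounded (hSm.mono (ℱ.le n) le_rfl)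
      (abs_sum_range_le_of_abs_le fun t ht ↦ hbdd t (by omega)) l
    have hd : Integrable (d n) P := .of_bound hdm.aestronglyMeasurable c
      (ae_of_all _ (hbdd n n.lt_succ_self))
    have hEd : Integrable (fun ω ↦ E ω * d n ω) P := hE.mul_bdd hdm.aestronglyMeasurable
      (ae_of_all _ (hbdd n n.lt_succ_self))
    -- the chord bound linearises the new factor; the linear term has mean zero
    have hchord : ∀ ω, exp (l * ∑ t ∈ range (n + 1), d t ω) ≤
        cosh (l * c) * E ω + sinh (l * c) / c * (E ω * d n ω) := fun ω ↦ by
      rw [sum_range_succ, mul_add, exp_add]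
      calc E ω * exp (l * d n ω) ≤ E ω * (cosh (l * c) + d n ω / c * sinh (l * c)) :=
            mul_le_mul_of_nonneg_left
              (exp_mul_le_cosh_add_div_mul_sinh hc (hbdd n n.lt_succ_self ω) l) (exp_nonneg _)
        _ = _ := by ring
    have hzero : ∫ ω, E ω * d n ω ∂P = 0 :=
      integral_mul_eq_zero_of_condExp_eq_zero (ℱ.le n) hEm.stronglyMeasurable hEd hd
        (hcond n n.lt_succ_self)
    calc ∫ ω, exp (l * ∑ t ∈ range (n + 1), d t ω) ∂P
        ≤ ∫ ω, (cosh (l * c) * E ω + sinh (l * c) / c * (E ω * d n ω)) ∂P :=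
          integral_mono (integrable_exp_mul_of_bounded
            ((measurable_sum_range_of_succ ℱ hmeas).mono (ℱ.le _) le_rfl)
            (abs_sum_range_le_of_abs_le hbdd) l)
            ((hE.const_mul _).add (hEd.const_mul _)) hchord
      _ = cosh (l * c) * ∫ ω, E ω ∂P := by
          rw [integral_add (hE.const_mul _) (hEd.const_mul _), integral_const_mul,
            integral_const_mul, hzero, mul_zero, add_zero]
      _ ≤ cosh (l * c) * cosh (l * c) ^ n :=
          mul_le_mul_of_nonneg_left (ih (fun t ht ↦ hmeas t (by omega))
            (fun t ht ↦ hbdd t (by omega)) fun t ht ↦ hcond t (by omega)) (cosh_pos _).le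
      _ = cosh (l * c) ^ (n + 1) := by ring

/-- **Azuma–Hoeffding**, in sub-Gaussian form. -/
theorem hasSubgaussianMGF_sum_range_of_abs_le (hc : 0 < c)
    (hmeas : ∀ t < n, Measurable[ℱ (t + 1)] (d t)) (hbdd : ∀ t < n, ∀ ω, |d t ω| ≤ c)
    (hcond : ∀ t < n, P[d t|ℱ t] =ᵐ[P] 0) :
    HasSubgaussianMGF (fun ω ↦ ∑ t ∈ range n, d t ω) (n * c ^ 2).toNNReal P where
  integrable_exp_mul := integrable_exp_mul_of_bounded
    ((measurable_sum_range_of_succ ℱ hmeas).mono (ℱ.le n) le_rfl)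
    (abs_sum_range_le_of_abs_le hbdd)
  mgf_le l := calc
    ∫ ω, exp (l * ∑ t ∈ range n, d t ω) ∂P ≤ cosh (l * c) ^ n :=
      integral_exp_mul_sum_range_le_cosh_pow ℱ hc hmeas hbdd hcond l
    _ ≤ exp ((l * c) ^ 2 / 2) ^ n := pow_le_pow_left₀ (cosh_pos _).le (cosh_le_exp_half_sq _) n
    _ = exp ((n * c ^ 2).toNNReal * l ^ 2 / 2) := by
      rw [← exp_nat_mul, Real.coe_toNNReal _ (by positivity)]; ring_nf

end BoundedDifferences

theorem HasSubgaussianMGF.measure_le_abs_le [IsFiniteMeasure P] {X : Ω → ℝ} {c : ℝ≥0}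
    (h : HasSubgaussianMGF X c P) {a : ℝ} (ha : 0 ≤ a) :
    P {ω | a ≤ |X ω|} ≤ ENNReal.ofReal (2 * exp (-a ^ 2 / (2 * c))) := by
  have hX : {ω | a ≤ |X ω|} = {ω | a ≤ X ω} ∪ {ω | a ≤ (-X) ω} := by
    ext ω; simp [le_abs]
  rw [hX, two_mul, ENNReal.ofReal_add (exp_nonneg _) (exp_nonneg _)]
  refine (measure_union_le _ _).trans (add_le_add ?_ ?_)
  · rw [← ofReal_measureReal]; exact ENNReal.ofReal_le_ofReal (h.measure_ge_le ha)
  · rw [← ofReal_measureReal]; exact ENNReal.ofReal_le_ofReal (h.neg.measure_ge_le ha)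

theorem ofReal_one_sub_le_measure [IsProbabilityMeasure P] {s : Set Ω} {β : ℝ} (hβ : 0 ≤ β)
    (h : P sᶜ ≤ ENNReal.ofReal β) : ENNReal.ofReal (1 - β) ≤ P s := by
  rw [ENNReal.ofReal_sub 1 hβ, ENNReal.ofReal_one, tsub_le_iff_right]
  calc 1 = P (s ∪ sᶜ) := by rw [Set.union_compl_self, measure_univ]
    _ ≤ P s + P sᶜ := measure_union_le _ _
    _ ≤ P s + ENNReal.ofReal β := add_le_add_right h _

end ProbabilityTheory

/-- The summand of `n • G_{ijℓ}` at time `t`, with `u = ⟨Θ*_{i**}, X^{t-1}⟩`, `x = x_i^t` and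
`y = x_j^{t-ℓ}`. -/
noncomputable def nllGradTerm (f : ℝ → ℝ) (u x y : ℝ) : ℝ :=
  ((1 - x) / (1 - f u) - x / f u) * deriv f u * y

/-- The linear predictor `⟨Θ*_{i**}, X^{t-1}⟩`; the lag `ℓ : Fin p` stands for `ℓ + 1`. -/
def linPred {Ω : Type*} {N p : ℕ} (Θs : Fin N → Fin N → Fin p → ℝ) (x : ℤ → Ω → Fin N → ℝ)
    (i : Fin N) (t : ℤ) (ω : Ω) : ℝ :=
  ∑ j : Fin N, ∑ ℓ : Fin p, Θs i j ℓ * x (t - ((ℓ : ℕ) : ℤ) - 1) ω j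

/-- The entry `G_{ijℓ}` of the gradient of the negative log-likelihood at `Θ*`. -/
noncomputable def nllGrad {Ω : Type*} {N p : ℕ} (f : ℝ → ℝ) (Θs : Fin N → Fin N → Fin p → ℝ)
    (x : ℤ → Ω → Fin N → ℝ) (n : ℕ) (i j : Fin N) (ℓ : Fin p) (ω : Ω) : ℝ :=
  1 / (n : ℝ) * ∑ t ∈ Icc (1 : ℤ) n,
    nllGradTerm f (linPred Θs x i t ω) (x t ω i) (x (t - ((ℓ : ℕ) : ℤ) - 1) ω j)

section NllGradTerm

variable {f : ℝ → ℝ} {ε Lf u x y : ℝ}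

theorem nllGradTerm_eq_sub_mul (h0 : f u ≠ 0) (h1 : 1 - f u ≠ 0) :
    nllGradTerm f u x y = (f u - x) * (deriv f u * y / (f u * (1 - f u))) := by
  unfold nllGradTerm; field_simp; ring

theorem abs_nllGradTerm_le (hε : 0 < ε) (hfu : f u ∈ Set.Icc ε (1 - ε)) (hf' : |deriv f u| ≤ Lf)
    (hx : x = 0 ∨ x = 1) (hy : |y| ≤ 1) : |nllGradTerm f u x y| ≤ Lf / ε := by
  obtain ⟨hε₁, hε₂⟩ := hfu
  have hLf : 0 ≤ Lf := (abs_nonneg _).trans hf'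
  have hscore : |(1 - x) / (1 - f u) - x / f u| ≤ 1 / ε := by
    rcases hx with rfl | rfl
    · rw [sub_zero, zero_div, sub_zero, abs_of_pos (by simp; linarith)]
      exact one_div_le_one_div_of_le hε (by linarith)
    · rw [sub_self, zero_div, zero_sub, abs_neg, abs_of_pos (by simp; linarith)]
      exact one_div_le_one_div_of_le hε hε₁
  calc |nllGradTerm f u x y| = |(1 - x) / (1 - f u) - x / f u| * |deriv f u| * |y| := by
        rw [nllGradTerm, abs_mul, abs_mul]
    _ ≤ 1 / ε * Lf * 1 := by gcongr
    _ = Lf / ε := by ring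

variable {Ω : Type*} {m m0 : MeasurableSpace Ω} {P : Measure Ω} {U X Y : Ω → ℝ}

theorem Measurable.nllGradTerm (hf : Measurable f) (hU : Measurable[m] U) (hX : Measurable[m] X)
    (hY : Measurable[m] Y) : Measurable[m] (fun ω ↦ nllGradTerm f (U ω) (X ω) (Y ω)) :=
  ((((measurable_const.sub hX).div (measurable_const.sub (hf.comp hU))).sub
    (hX.div (hf.comp hU))).mul ((measurable_deriv f).comp hU)).mul hY

theorem condExp_nllGradTerm_eq_zero [IsFiniteMeasure P] (hm : m ≤ m0) [SigmaFinite (P.trim hm)]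
    (hf : Measurable f) (hε : 0 < ε) (hfr : ∀ v, f v ∈ Set.Icc ε (1 - ε))
    (hf' : ∀ v, |deriv f v| ≤ Lf) (hU : Measurable[m] U) (hX : Measurable X)
    (hX01 : ∀ ω, X ω = 0 ∨ X ω = 1) (hY : Measurable[m] Y) (hY1 : ∀ ω, |Y ω| ≤ 1)
    (hcond : P[X|m] =ᵐ[P] fun ω ↦ f (U ω)) :
    P[fun ω ↦ nllGradTerm f (U ω) (X ω) (Y ω)|m] =ᵐ[P] 0 := by
  have hf0 : ∀ v, f v ≠ 0 := fun v ↦ (hε.trans_le (hfr v).1).ne'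
  have hf1 : ∀ v, 1 - f v ≠ 0 := fun v ↦ by linarith [(hfr v).2]
  have hfU : Measurable[m] fun ω ↦ f (U ω) := hf.comp hU
  have hW : Measurable[m] fun ω ↦ deriv f (U ω) * Y ω / (f (U ω) * (1 - f (U ω))) :=
    (((measurable_deriv f).comp hU).mul hY).div (hfU.mul (measurable_const.sub hfU))
  have heq : (fun ω ↦ nllGradTerm f (U ω) (X ω) (Y ω)) =
      ((fun ω ↦ f (U ω)) - X) * fun ω ↦ deriv f (U ω) * Y ω / (f (U ω) * (1 - f (U ω))) :=
    funext fun ω ↦ nllGradTerm_eq_sub_mul (hf0 _) (hf1 _)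
  have hint : ∀ {g : Ω → ℝ} {C : ℝ}, Measurable g → (∀ ω, |g ω| ≤ C) → Integrable g P :=
    fun hg hC ↦ .of_bound hg.aestronglyMeasurable _ (ae_of_all _ hC)
  rw [heq]
  refine condExp_sub_mul_eq_zero hm hfU.stronglyMeasurable hW.stronglyMeasurable
    (hint (hfU.mono hm le_rfl) (C := 1) fun ω ↦ ?_) (hint hX (C := 1) fun ω ↦ ?_) ?_ hcond
  · exact abs_le.2 ⟨by linarith [(hfr (U ω)).1], by linarith [(hfr (U ω)).2]⟩
  · rcases hX01 ω with h | h <;> simp [h]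
  · rw [← heq]
    exact hint (hf.nllGradTerm (hU.mono hm le_rfl) hX (hY.mono hm le_rfl))
      fun ω ↦ abs_nllGradTerm_le hε (hfr _) (hf' _) (hX01 ω) (hY1 ω)

end NllGradTerm

theorem Finset.sum_Icc_one_intCast_eq_sum_range {M : Type*} [AddCommMonoid M] (n : ℕ)
    (g : ℤ → M) :
    ∑ s ∈ Icc (1 : ℤ) n, g s = ∑ t ∈ range n, g (t + 1) := by
  refine sum_nbij' (fun s ↦ (s - 1).toNat) (fun t ↦ t + 1) ?_ ?_ ?_ ?_ ?_ <;>
    intro a ha <;> simp only [mem_Icc, mem_range] at ha ⊢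
  all_goals first | omega | (congr 1; omega)

section BernoulliProcess

variable {Ω : Type*} {m0 : MeasurableSpace Ω} {P : Measure Ω} {N p n : ℕ} {ℱ : Filtration ℕ m0}
  {x : ℤ → Ω → Fin N → ℝ}

theorem measurable_apply_of_le (hxmeas0 : ∀ t : ℤ, t ≤ 0 → Measurable[ℱ 0] (x t))
    (hxmeas : ∀ t : ℤ, 1 ≤ t → t ≤ (n : ℤ) → Measurable[ℱ t.toNat] (x t)) {r : ℤ} (hrn : r ≤ n)
    {k : ℕ} (hrk : r ≤ k) (j : Fin N) : Measurable[ℱ k] fun ω ↦ x r ω j := by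
  rcases le_or_gt r 0 with h0 | h1
  · exact ((measurable_pi_apply j).comp (hxmeas0 r h0)).mono (ℱ.mono k.zero_le) le_rfl
  · exact ((measurable_pi_apply j).comp (hxmeas r h1 hrn)).mono (ℱ.mono (by omega)) le_rfl

theorem measurable_linPred (hxmeas0 : ∀ t : ℤ, t ≤ 0 → Measurable[ℱ 0] (x t))
    (hxmeas : ∀ t : ℤ, 1 ≤ t → t ≤ (n : ℤ) → Measurable[ℱ t.toNat] (x t))
    (Θs : Fin N → Fin N → Fin p → ℝ) (i : Fin N) {t : ℕ} (ht : t ≤ n) :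
    Measurable[ℱ t] (linPred Θs x i (t + 1)) :=
  Finset.measurable_sum _ fun j _ ↦ Finset.measurable_sum _ fun _ _ ↦
    (measurable_apply_of_le hxmeas0 hxmeas (by omega) (by omega) j).const_mul _

theorem measure_le_abs_sum_nllGradTerm_le [IsProbabilityMeasure P] {f : ℝ → ℝ} {ε Lf : ℝ}
    (hf : Measurable f) (hε : 0 < ε) (hLf : 0 < Lf) (hfr : ∀ u, f u ∈ Set.Icc ε (1 - ε))
    (hf' : ∀ u, |deriv f u| ≤ Lf)
    (hx01 : ∀ t ∈ Icc (1 - (p : ℤ)) n, ∀ ω i, x t ω i = 0 ∨ x t ω i = 1)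
    (hxmeas0 : ∀ t : ℤ, t ≤ 0 → Measurable[ℱ 0] (x t))
    (hxmeas : ∀ t : ℤ, 1 ≤ t → t ≤ (n : ℤ) → Measurable[ℱ t.toNat] (x t))
    (Θs : Fin N → Fin N → Fin p → ℝ)
    (hcond : ∀ t : ℤ, 1 ≤ t → t ≤ (n : ℤ) → ∀ i : Fin N,
      P[(fun ω ↦ x t ω i)|ℱ (t.toNat - 1)] =ᵐ[P] fun ω ↦ f (linPred Θs x i t ω))
    (i j : Fin N) (ℓ : Fin p) {a : ℝ} (ha : 0 ≤ a) :
    P {ω | a ≤ |∑ t ∈ Icc (1 : ℤ) n,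
      nllGradTerm f (linPred Θs x i t ω) (x t ω i) (x (t - ((ℓ : ℕ) : ℤ) - 1) ω j)|} ≤
      ENNReal.ofReal (2 * exp (-a ^ 2 / (2 * (n * (Lf / ε) ^ 2)))) := by
  set d : ℕ → Ω → ℝ := fun t ω ↦ nllGradTerm f (linPred Θs x i (t + 1) ω) (x (t + 1) ω i)
    (x (t + 1 - ((ℓ : ℕ) : ℤ) - 1) ω j)
  have hx1 : ∀ r : ℤ, 1 - (p : ℤ) ≤ r → r ≤ n → ∀ ω k, |x r ω k| ≤ 1 := fun r h1 h2 ω k ↦ by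
    rcases hx01 r (mem_Icc.2 ⟨h1, h2⟩) ω k with h | h <;> simp [h]
  have hmeas : ∀ t < n, Measurable[ℱ (t + 1)] (d t) := fun t ht ↦
    hf.nllGradTerm
      ((measurable_linPred hxmeas0 hxmeas Θs i ht.le).mono (ℱ.mono t.le_succ) le_rfl)
      (measurable_apply_of_le hxmeas0 hxmeas (by omega) (by omega) i)
      (measurable_apply_of_le hxmeas0 hxmeas (by omega) (by omega) j)
  have hbdd : ∀ t < n, ∀ ω, |d t ω| ≤ Lf / ε := fun t ht ω ↦
    abs_nllGradTerm_le hε (hfr _) (hf' _) (hx01 _ (mem_Icc.2 ⟨by omega, by omega⟩) ω i)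
      (hx1 _ (by omega) (by omega) ω j)
  have hmart : ∀ t < n, P[d t|ℱ t] =ᵐ[P] 0 := fun t ht ↦
    condExp_nllGradTerm_eq_zero (ℱ.le t) hf hε hfr hf'
      (measurable_linPred hxmeas0 hxmeas Θs i ht.le)
      ((measurable_apply_of_le hxmeas0 hxmeas (k := t + 1) (by omega) (by omega) i).mono
        (ℱ.le _) le_rfl)
      (fun ω ↦ hx01 _ (mem_Icc.2 ⟨by omega, by omega⟩) ω i)
      (measurable_apply_of_le hxmeas0 hxmeas (by omega) (by omega) j)
      (fun ω ↦ hx1 _ (by omega) (by omega) ω j)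
      (by simpa using hcond (t + 1) (by omega) (by omega) i)
  have h := (hasSubgaussianMGF_sum_range_of_abs_le ℱ (by positivity) hmeas hbdd hmart
    ).measure_le_abs_le ha
  rw [Real.coe_toNNReal _ (by positivity)] at h
  simpa only [sum_Icc_one_intCast_eq_sum_range] using h

theorem measure_lt_abs_nllGrad_le [IsProbabilityMeasure P] {f : ℝ → ℝ} {ε Lf : ℝ} (hn : 0 < n)
    (hf : Measurable f) (hε : 0 < ε) (hLf : 0 < Lf) (hfr : ∀ u, f u ∈ Set.Icc ε (1 - ε))
    (hf' : ∀ u, |deriv f u| ≤ Lf)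
    (hx01 : ∀ t ∈ Icc (1 - (p : ℤ)) n, ∀ ω i, x t ω i = 0 ∨ x t ω i = 1)
    (hxmeas0 : ∀ t : ℤ, t ≤ 0 → Measurable[ℱ 0] (x t))
    (hxmeas : ∀ t : ℤ, 1 ≤ t → t ≤ (n : ℤ) → Measurable[ℱ t.toNat] (x t))
    (Θs : Fin N → Fin N → Fin p → ℝ)
    (hcond : ∀ t : ℤ, 1 ≤ t → t ≤ (n : ℤ) → ∀ i : Fin N,
      P[(fun ω ↦ x t ω i)|ℱ (t.toNat - 1)] =ᵐ[P] fun ω ↦ f (linPred Θs x i t ω))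
    (i j : Fin N) (ℓ : Fin p) {b : ℝ} (hb : 0 ≤ b) :
    P {ω | b < |nllGrad f Θs x n i j ℓ ω|} ≤
      ENNReal.ofReal (2 * exp (-(n * b ^ 2) / (2 * (Lf / ε) ^ 2))) := by
  have hn' : (0 : ℝ) < n := Nat.cast_pos.2 hn
  refine (measure_mono fun ω hω ↦ ?_).trans ((measure_le_abs_sum_nllGradTerm_le hf hε hLf hfr
    hf' hx01 hxmeas0 hxmeas Θs hcond i j ℓ (by positivity : 0 ≤ n * b)).trans_eq ?_)
  · rw [Set.mem_ofPred_eq, nllGrad, abs_mul, abs_of_pos (one_div_pos.2 hn'),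
      one_div_mul_eq_div, lt_div_iff₀ hn', mul_comm] at hω
    exact hω.le
  · congr 3; field_simp

end BernoulliProcess

theorem stmt14_general {Ω : Type*} [m0 : MeasurableSpace Ω] (P : Measure Ω)
    [IsProbabilityMeasure P]
    (N p n : ℕ) (hn : 1 ≤ n) (hNp : 2 ≤ N ^ 2 * p)
    (ε Lf : ℝ) (hε0 : 0 < ε) (hLf : 0 < Lf)
    (f : ℝ → ℝ) (hfd : Differentiable ℝ f)
    (hfr : ∀ u, f u ∈ Set.Icc ε (1 - ε)) (hf' : ∀ u, |deriv f u| ≤ Lf)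
    (ℱ : ℕ → MeasurableSpace Ω) (hmono : Monotone ℱ) (hle : ∀ t, ℱ t ≤ m0)
    (x : ℤ → Ω → Fin N → ℝ)
    (hx01 : ∀ t ∈ Finset.Icc (1 - (p : ℤ)) (n : ℤ), ∀ ω, ∀ i, x t ω i = 0 ∨ x t ω i = 1)
    (hxmeas0 : ∀ t : ℤ, t ≤ 0 → Measurable[ℱ 0] (x t))
    (hxmeas : ∀ t : ℤ, 1 ≤ t → t ≤ (n : ℤ) → Measurable[ℱ t.toNat] (x t))
    (Θs : Fin N → Fin N → Fin p → ℝ)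
    (z : ℤ → Fin N → Ω → ℝ)
    (hz : ∀ t i ω,
      z t i ω = f (∑ j : Fin N, ∑ ℓ : Fin p, Θs i j ℓ * x (t - ((ℓ : ℕ) : ℤ) - 1) ω j))
    (hcond : ∀ t : ℤ, 1 ≤ t → t ≤ (n : ℤ) → ∀ i : Fin N,
      P[(fun ω => x t ω i)|ℱ (t.toNat - 1)] =ᵐ[P] z t i)
    (c₁ : ℝ) (hc₁ : 2 < c₁) :
    ENNReal.ofReal (1 - 2 * ((N : ℝ) ^ 2 * (p : ℝ)) ^ (-(c₁ / 2 - 1))) ≤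
      P {ω | ∀ (i j : Fin N) (ℓ : Fin p),
        |(1 / (n : ℝ)) * ∑ t ∈ Finset.Icc (1 : ℤ) (n : ℤ),
            ((1 - x t ω i) / (1 - z t i ω) - x t ω i / z t i ω) *
              deriv f (∑ j' : Fin N, ∑ ℓ' : Fin p,
                Θs i j' ℓ' * x (t - ((ℓ' : ℕ) : ℤ) - 1) ω j') *
              x (t - ((ℓ : ℕ) : ℤ) - 1) ω j| ≤
          (Lf / ε) * Real.sqrt (c₁ * Real.log ((N : ℝ) ^ 2 * (p : ℝ)) / (n : ℝ))} := by
  obtain rfl : z = fun t i ω ↦ f (linPred Θs x i t ω) :=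
    funext fun t ↦ funext fun i ↦ funext (hz t i)
  have hK : (2 : ℝ) ≤ N ^ 2 * p := by exact_mod_cast hNp
  set K : ℝ := (N : ℝ) ^ 2 * p
  set b : ℝ := Lf / ε * √(c₁ * log K / n)
  change ENNReal.ofReal _ ≤ P {ω | ∀ i j ℓ, |nllGrad f Θs x n i j ℓ ω| ≤ b}
  have htail : ∀ i j ℓ, P {ω | b < |nllGrad f Θs x n i j ℓ ω|} ≤
      ENNReal.ofReal (2 * K ^ (-(c₁ / 2))) := by
    intro i j ℓ
    refine (measure_lt_abs_nllGrad_le (ℱ := ⟨ℱ, hmono, hle⟩) hn hfd.continuous.measurable hε0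
      hLf hfr hf' hx01 hxmeas0 hxmeas Θs hcond i j ℓ (by positivity)).trans_eq ?_
    have hlog : 0 ≤ log K := log_nonneg (by linarith)
    rw [rpow_def_of_pos (by linarith), mul_pow, sq_sqrt (by positivity)]
    congr 3
    field_simp
  refine ofReal_one_sub_le_measure (by positivity) ?_
  calc P {ω | ∀ i j ℓ, |nllGrad f Θs x n i j ℓ ω| ≤ b}ᶜ
      ≤ P (⋃ k : Fin N × Fin N × Fin p, {ω | b < |nllGrad f Θs x n k.1 k.2.1 k.2.2 ω|}) :=
        measure_mono fun ω hω ↦ by simpa using hω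
    _ ≤ ∑ k : Fin N × Fin N × Fin p, P {ω | b < |nllGrad f Θs x n k.1 k.2.1 k.2.2 ω|} :=
        measure_iUnion_fintype_le _ _
    _ ≤ ∑ _k : Fin N × Fin N × Fin p, ENNReal.ofReal (2 * K ^ (-(c₁ / 2))) :=
        sum_le_sum fun k _ ↦ htail _ _ _
    _ = ENNReal.ofReal (2 * K ^ (-(c₁ / 2 - 1))) := by
        rw [sum_const, card_univ, nsmul_eq_mul, ← ENNReal.ofReal_natCast,
          ← ENNReal.ofReal_mul (by positivity)]
        congr 1
        simp only [Fintype.card_prod, Fintype.card_fin]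
        rw [neg_sub, sub_eq_add_neg, rpow_add (by linarith), rpow_one]
        push_cast
        ring

/-- with probability at least `1 − 2(N²p)^{−(c₁/2−1)}`, every entry of
the gradient of the negative log-likelihood at the true parameter `Θ*` is at most
`(L_f/ε)·√(c₁ log(N²p)/n)` in absolute value. -/
theorem stmt14 {Ω : Type*} [m0 : MeasurableSpace Ω] (P : Measure Ω)
    [IsProbabilityMeasure P]
    (N p n : ℕ) (hN : 1 ≤ N) (hp : 1 ≤ p) (hn : 1 ≤ n) (hNp : 2 ≤ N ^ 2 * p)
    (ε Lf : ℝ) (hε0 : 0 < ε) (hε1 : ε < 1 / 2) (hLf : 0 < Lf)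
    (f : ℝ → ℝ) (hfd : Differentiable ℝ f)
    (hfr : ∀ u, f u ∈ Set.Icc ε (1 - ε)) (hf' : ∀ u, |deriv f u| ≤ Lf)
    (ℱ : ℕ → MeasurableSpace Ω) (hmono : Monotone ℱ) (hle : ∀ t, ℱ t ≤ m0)
    (x : ℤ → Ω → Fin N → ℝ)
    (hx01 : ∀ t ∈ Finset.Icc (1 - (p : ℤ)) (n : ℤ), ∀ ω, ∀ i, x t ω i = 0 ∨ x t ω i = 1)
    (hxmeas0 : ∀ t : ℤ, t ≤ 0 → Measurable[ℱ 0] (x t))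
    (hxmeas : ∀ t : ℤ, 1 ≤ t → t ≤ (n : ℤ) → Measurable[ℱ t.toNat] (x t))
    (Θs : Fin N → Fin N → Fin p → ℝ)
    (z : ℤ → Fin N → Ω → ℝ)
    (hz : ∀ t i ω,
      z t i ω = f (∑ j : Fin N, ∑ ℓ : Fin p, Θs i j ℓ * x (t - ((ℓ : ℕ) : ℤ) - 1) ω j))
    (hcond : ∀ t : ℤ, 1 ≤ t → t ≤ (n : ℤ) → ∀ i : Fin N,
      P[(fun ω => x t ω i)|ℱ (t.toNat - 1)] =ᵐ[P] z t i)
    (c₁ : ℝ) (hc₁ : 2 < c₁) :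
    ENNReal.ofReal (1 - 2 * ((N : ℝ) ^ 2 * (p : ℝ)) ^ (-(c₁ / 2 - 1))) ≤
      P {ω | ∀ (i j : Fin N) (ℓ : Fin p),
        |(1 / (n : ℝ)) * ∑ t ∈ Finset.Icc (1 : ℤ) (n : ℤ),
            ((1 - x t ω i) / (1 - z t i ω) - x t ω i / z t i ω) *
              deriv f (∑ j' : Fin N, ∑ ℓ' : Fin p,
                Θs i j' ℓ' * x (t - ((ℓ' : ℕ) : ℤ) - 1) ω j') *
              x (t - ((ℓ : ℕ) : ℤ) - 1) ω j| ≤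
          (Lf / ε) * Real.sqrt (c₁ * Real.log ((N : ℝ) ^ 2 * (p : ℝ)) / (n : ℝ))} :=
  stmt14_general (m0 := m0) P N p n hn hNp ε Lf hε0 hLf f hfd hfr hf' ℱ hmono hle x hx01 hxmeas0
    hxmeas Θs z hz hcond c₁ hc₁
end
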